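/- arXiv:0710.4662 — 9 statements merged into one kernel-verified Lean document; each statement's English description precedes it below -/
import Mathlib

section
/- Let 𝔽q, F, v, R, Λ and the generators λ1 < … < λm be as in the context (the abstract core of the paper's main theorem). If φ1, …, φn : R → 𝔽q are pairwise distinct 𝔽q-algebra homomorphisms, then n ≤ #(Λ \ ∪_{i=1}^{m} (q·λi + Λ)). (In the function-field situation this says: a function field over 𝔽q possessing a rational place whose Weierstrass semigroup is Λ = ⟨λ1, …, λm⟩ has at most #(Λ \ ∪_{i=1}^{m}(q·λi + Λ)) + 1 rational places.) -/
/-!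
By Dedekind's independence of characters, evaluation at the `n` distinct homomorphisms maps `R`
onto `𝔽q ^ n`, so it suffices that the evaluations of all of `R` are spanned by those of one
element of each pole order in `Λ \ ⋃ i, (q λᵢ + Λ)`. If `g, h ∈ R` have pole orders `λᵢ, μ`,
then `(g ^ q - g) h` has pole order `q λᵢ + μ` and is killed by every homomorphism to `𝔽q`; as the
residue field is `𝔽q`, induction on the pole order shows that every element of `R` is, modulo
that kernel, a combination of the chosen representatives. A pole order outside every `q λᵢ + Λ`
is `∑ aᵢ λᵢ` with all `aᵢ < q`, so there are finitely many of them.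
-/

open Module Submodule Set

theorem exists_addValuation_coe_eq {A : Type*} [Ring A] [Nontrivial A] (v : A → WithTop ℤ)
    (hmul : ∀ f g, v (f * g) = v f + v g) (hadd : ∀ f g, min (v f) (v g) ≤ v (f + g))
    (htop : ∀ f, v f = ⊤ ↔ f = 0) : ∃ w : AddValuation A (WithTop ℤ), ⇑w = v := by
  have h1 : v 1 = 0 := by
    have h11 := hmul 1 1
    rw [mul_one] at h11
    lift v 1 to ℤ using (htop 1).not.mpr one_ne_zero with a
    norm_cast at h11 ⊢
    omega
  exact ⟨.of v ((htop 0).mpr rfl) h1 hadd hmul, rfl⟩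

theorem WithTop.exists_eq_neg_natCast {z : WithTop ℤ} (hz : z ≠ ⊤) (h : z ≤ 0) :
    ∃ N : ℕ, z = ((-(N : ℤ) : ℤ) : WithTop ℤ) := by
  lift z to ℤ using hz
  exact ⟨(-z).toNat, by norm_cast at h ⊢; omega⟩

theorem span_range_algHom_eval_eq_top {K A ι : Type*} [Field K] [Semiring A] [Algebra K A]
    [Finite ι] {φ : ι → A →ₐ[K] K} (hφ : Function.Injective φ) :
    span K (range fun (a : A) (i : ι) => φ i a) = ⊤ :=
  span_flip_eq_top_iff_linearIndependent.mpr <|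
    (linearIndependent_monoidHom A K).comp (fun i => (φ i : A →* K))
      fun _ _ h => hφ (AlgHom.ext (DFunLike.congr_fun h :))

theorem finite_diff_iUnion_image_add {m : ℕ} {lam : Fin m → ℕ} {Λ : Set ℕ}
    (hΛ : Λ = {n : ℕ | ∃ a : Fin m → ℕ, n = ∑ i, a i * lam i}) (q : ℕ) :
    (Λ \ ⋃ i, (fun x => q * lam i + x) '' Λ).Finite := by
  subst hΛ
  refine (finite_range fun a : Fin m → Fin q => ∑ i, (a i : ℕ) * lam i).subset ?_
  rintro _ ⟨⟨a, rfl⟩, hU⟩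
  have ha : ∀ i, a i < q := by
    intro i
    by_contra! hi
    refine hU (mem_iUnion.mpr ⟨i, _, ⟨a - Pi.single i q, rfl⟩, ?_⟩)
    have hle : Pi.single i q ≤ a := by
      intro j
      rcases eq_or_ne j i with rfl | hj <;> simp [*]
    conv_rhs => rw [← tsub_add_cancel_of_le hle]
    simp only [Pi.add_apply, add_mul, Finset.sum_add_distrib, Pi.single_apply, ite_mul, zero_mul,
      Finset.sum_ite_eq', Finset.mem_univ, if_true, add_comm]
  exact ⟨fun i => ⟨a i, ha i⟩, rfl⟩

namespace AddValuation

theorem map_pow_sub_self {A : Type*} [Ring A] {w : AddValuation A (WithTop ℤ)} {g : A}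
    (hg : w g < 0) {q : ℕ} (hq : 1 < q) : w (g ^ q - g) = q • w g := by
  have hpow : w (g ^ q) < w g := by
    rw [map_pow]
    lift w g to ℤ using hg.ne_top with z
    rw [← WithTop.coe_nsmul]
    norm_cast at hg ⊢
    rw [nsmul_eq_mul]
    nlinarith
  rw [map_sub_eq_of_lt_left _ hpow, map_pow]

variable {K F : Type*} [Field K] [Field F] [Algebra K F] {w : AddValuation F (WithTop ℤ)}

def poleOrders (w : AddValuation F (WithTop ℤ)) (R : Set F) : Set ℕ :=
  {n : ℕ | ∃ f ∈ R, f ≠ 0 ∧ w f = ((-(n : ℤ) : ℤ) : WithTop ℤ)}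

theorem exists_lt_map_sub_algebraMap_mul
    (hres : ∀ f, 0 ≤ w f → ∃ c : K, 0 < w (f - algebraMap K F c)) {f g : F} (hg : g ≠ 0)
    (hfg : w f = w g) : ∃ c : K, w f < w (f - algebraMap K F c * g) := by
  have hwg : w g ≠ ⊤ := w.ne_top_iff.mpr hg
  have hquot : w (f * g⁻¹) = 0 := by
    refine WithTop.add_right_cancel hwg ?_
    rw [← map_mul, inv_mul_cancel_right₀ hg, hfg, zero_add]
  obtain ⟨c, hc⟩ := hres (f * g⁻¹) hquot.ge
  refine ⟨c, ?_⟩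
  rw [show f - algebraMap K F c * g = (f * g⁻¹ - algebraMap K F c) * g by field_simp, map_mul,
    hfg]
  simpa using WithTop.add_lt_add_right hwg hc

theorem exists_map_eq_neg_natCast {R : Subalgebra K F} (hR : ∀ f ∈ R, f ≠ 0 → w f ≤ 0) {x : R}
    (hx : x ≠ 0) : ∃ N : ℕ, w x = ((-(N : ℤ) : ℤ) : WithTop ℤ) :=
  WithTop.exists_eq_neg_natCast (w.ne_top_iff.mpr (by simpa using hx)) (hR x x.2 (by simpa))

theorem mem_of_forall_mem_poleOrders
    (hres : ∀ f, 0 ≤ w f → ∃ c : K, 0 < w (f - algebraMap K F c))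
    {R : Subalgebra K F} (hR : ∀ f ∈ R, f ≠ 0 → w f ≤ 0)
    {V : Type*} [AddCommGroup V] [Module K V] (L : R →ₗ[K] V) {W : Submodule K V}
    (h : ∀ N ∈ w.poleOrders R, ∃ y : R, w y = ((-(N : ℤ) : ℤ) : WithTop ℤ) ∧ L y ∈ W)
    (x : R) : L x ∈ W := by
  suffices ∀ N : ℕ, ∀ x : R, w x = ((-(N : ℤ) : ℤ) : WithTop ℤ) → L x ∈ W by
    rcases eq_or_ne x 0 with rfl | hx
    · simp
    · obtain ⟨N, hN⟩ := exists_map_eq_neg_natCast hR hx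
      exact this N x hN
  intro N
  induction N using Nat.strong_induction_on with
  | _ N ih =>
  intro x hxN
  have hx : (x : F) ≠ 0 := by
    rw [← w.ne_top_iff, hxN]
    exact WithTop.coe_ne_top
  obtain ⟨y, hyN, hyW⟩ := h N ⟨x, x.2, hx, hxN⟩
  obtain ⟨c, hc⟩ := exists_lt_map_sub_algebraMap_mul hres
    (w.ne_top_iff.mp (hyN ▸ WithTop.coe_ne_top)) (hxN.trans hyN.symm)
  have hsub : L (x - c • y) ∈ W := by
    rcases eq_or_ne (x - c • y) 0 with h0 | h0
    · simp [h0]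
    · obtain ⟨N', hN'⟩ := exists_map_eq_neg_natCast hR h0
      refine ih N' ?_ _ hN'
      rw [hxN, ← Algebra.smul_def, ← Subalgebra.coe_smul, ← Subalgebra.coe_sub, hN'] at hc
      norm_cast at hc
      omega
  simpa using W.add_mem hsub (W.smul_mem c hyW)

theorem exists_map_eq_card_mul_add_and_algHom_eq_zero [Fintype K] {R : Subalgebra K F} {l μ : ℕ}
    (hl : l ∈ w.poleOrders R) (hl0 : 0 < l) (hμ : μ ∈ w.poleOrders R) :
    ∃ k : R, w k = ((-((Fintype.card K * l + μ : ℕ) : ℤ) : ℤ) : WithTop ℤ) ∧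
      ∀ φ : R →ₐ[K] K, φ k = 0 := by
  obtain ⟨a, ha, -, hwa⟩ := hl
  obtain ⟨b, hb, -, hwb⟩ := hμ
  refine ⟨(⟨a, ha⟩ ^ Fintype.card K - ⟨a, ha⟩) * ⟨b, hb⟩, ?_, fun φ => ?_⟩
  · have hneg : w a < 0 := by
      rw [hwa]
      exact_mod_cast neg_lt_zero.mpr (Int.natCast_pos.mpr hl0)
    push_cast
    rw [map_mul, map_pow_sub_self hneg Fintype.one_lt_card, hwa, hwb, ← WithTop.coe_nsmul,
      ← WithTop.coe_add]
    congr 1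
    push_cast [nsmul_eq_mul]
    ring
  · rw [_root_.map_mul, _root_.map_sub, _root_.map_pow, FiniteField.pow_card, sub_self,
      zero_mul]

theorem eval_mem_span_of_poleOrders_diff_iUnion [Fintype K]
    (hres : ∀ f, 0 ≤ w f → ∃ c : K, 0 < w (f - algebraMap K F c))
    {R : Subalgebra K F} (hR : ∀ f ∈ R, f ≠ 0 → w f ≤ 0) {ι : Type*} (φ : ι → R →ₐ[K] K)
    {m : ℕ} {lam : Fin m → ℕ} (hlam : ∀ i, lam i ∈ w.poleOrders R) (hlam_pos : ∀ i, 0 < lam i)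
    {g : ℕ → R} (hg : ∀ d ∈ w.poleOrders R, w (g d) = ((-(d : ℤ) : ℤ) : WithTop ℤ)) (x : R) :
    (fun j => φ j x) ∈ span K (range fun d : ↥(w.poleOrders R \
      ⋃ i, (fun x => Fintype.card K * lam i + x) '' w.poleOrders R) => fun j => φ j (g d)) := by
  refine mem_of_forall_mem_poleOrders hres hR (LinearMap.pi fun j => (φ j).toLinearMap)
    (fun d hd => ?_) x
  by_cases hdD : d ∈ w.poleOrders R \
      ⋃ i, (fun x => Fintype.card K * lam i + x) '' w.poleOrders R
  · exact ⟨g d, hg d hd, subset_span ⟨⟨d, hdD⟩, rfl⟩⟩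
  obtain ⟨i, μ, hμ, rfl⟩ : ∃ i, ∃ μ ∈ w.poleOrders R, Fintype.card K * lam i + μ = d := by
    simpa [hd] using hdD
  obtain ⟨k, hk, hφk⟩ := exists_map_eq_card_mul_add_and_algHom_eq_zero (hlam i) (hlam_pos i) hμ
  refine ⟨k, hk, ?_⟩
  convert Submodule.zero_mem _
  exact funext fun j => hφk (φ j)

end AddValuation

theorem rational_places_bound_general
    {Fq : Type*} [Field Fq] [Fintype Fq]
    {F : Type*} [Field F] [Algebra Fq F]
    (q : ℕ) (hq : q = Fintype.card Fq)
    (v : F → WithTop ℤ)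
    (hv_mul : ∀ f g : F, v (f * g) = v f + v g)
    (hv_add : ∀ f g : F, min (v f) (v g) ≤ v (f + g))
    (hv_top : ∀ f : F, v f = ⊤ ↔ f = 0)
    (hv_res : ∀ f : F, 0 ≤ v f → ∃ c : Fq, 0 < v (f - algebraMap Fq F c))
    (R : Subalgebra Fq F)
    (hR : ∀ f ∈ R, f ≠ 0 → v f ≤ 0)
    (Λ : Set ℕ)
    (hΛ : Λ = {n : ℕ | ∃ f ∈ R, f ≠ 0 ∧ v f = ((-(n : ℤ) : ℤ) : WithTop ℤ)})
    (m : ℕ) (lam : Fin m → ℕ)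
    (hlam_pos : ∀ i, 0 < lam i)
    (hgen : Λ = {n : ℕ | ∃ a : Fin m → ℕ, n = ∑ i, a i * lam i})
    (n : ℕ) (φ : Fin n → (R →ₐ[Fq] Fq))
    (hφ : Function.Injective φ) :
    n ≤ (Λ \ ⋃ i : Fin m, (fun x => q * lam i + x) '' Λ).ncard := by
  obtain ⟨w, rfl⟩ := exists_addValuation_coe_eq v hv_mul hv_add hv_top
  change Λ = w.poleOrders R at hΛ
  subst hq hΛ
  set D := w.poleOrders R \ ⋃ i, (fun x => Fintype.card Fq * lam i + x) '' w.poleOrders R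
  have : Fintype D := (finite_diff_iUnion_image_add hgen _).fintype
  have hlam : ∀ i, lam i ∈ w.poleOrders R :=
    fun i => hgen ▸ ⟨Pi.single i 1, by simp [Pi.single_apply]⟩
  have hrep : ∀ d ∈ w.poleOrders R, ∃ y : R, w y = ((-(d : ℤ) : ℤ) : WithTop ℤ) :=
    fun _ ⟨f, hfR, _, hf⟩ => ⟨⟨f, hfR⟩, hf⟩
  choose! g hg using hrep
  have hW := top_unique <| (span_range_algHom_eval_eq_top hφ).ge.trans <| span_le.mpr <|
    range_subset_iff.mpr <| AddValuation.eval_mem_span_of_poleOrders_diff_iUnion hv_res hR φ hlam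
      hlam_pos hg
  calc n = finrank Fq (Fin n → Fq) := (finrank_fin_fun Fq).symm
    _ = finrank Fq (span Fq (range fun d : D => fun j => φ j (g d))) := by rw [hW, finrank_top]
    _ ≤ Fintype.card D := finrank_range_le_card _
    _ = D.ncard := Nat.card_eq_fintype_card.symm

/-- Abstract core of the paper's main theorem (Theorem 1, bound (2)).
Let `Fq` be a finite field with `q` elements, `F ⊇ Fq` a field, `v` a discrete
valuation on `F` with `v` trivial on `Fq ∖ {0}` and residue field `Fq`, and `R`
an `Fq`-subalgebra of `F` whose nonzero elements have `v ≤ 0`.  Let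
`Λ = {-v f : f ∈ R, f ≠ 0}` have finitely many gaps and be generated by the
positive integers `λ 0 < … < λ (m-1)`.  If `φ 1, …, φ n : R → Fq` are pairwise
distinct `Fq`-algebra homomorphisms, then
`n ≤ #(Λ \ ⋃ i, (q·λ i + Λ))`. -/
theorem rational_places_bound
    {Fq : Type*} [Field Fq] [Fintype Fq]
    {F : Type*} [Field F] [Algebra Fq F]
    (q : ℕ) (hq : q = Fintype.card Fq)
    (v : F → WithTop ℤ)
    (hv_mul : ∀ f g : F, v (f * g) = v f + v g)
    (hv_add : ∀ f g : F, min (v f) (v g) ≤ v (f + g))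
    (hv_top : ∀ f : F, v f = ⊤ ↔ f = 0)
    (hv_const : ∀ c : Fq, c ≠ 0 → v (algebraMap Fq F c) = 0)
    (hv_res : ∀ f : F, 0 ≤ v f → ∃ c : Fq, 0 < v (f - algebraMap Fq F c))
    (R : Subalgebra Fq F)
    (hR : ∀ f ∈ R, f ≠ 0 → v f ≤ 0)
    (Λ : Set ℕ)
    (hΛ : Λ = {n : ℕ | ∃ f ∈ R, f ≠ 0 ∧ v f = ((-(n : ℤ) : ℤ) : WithTop ℤ)})
    (hgaps : (Λᶜ : Set ℕ).Finite)
    (m : ℕ) (lam : Fin m → ℕ)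
    (hlam_pos : ∀ i, 0 < lam i)
    (hlam_mono : StrictMono lam)
    (hgen : Λ = {n : ℕ | ∃ a : Fin m → ℕ, n = ∑ i, a i * lam i})
    (n : ℕ) (φ : Fin n → (R →ₐ[Fq] Fq))
    (hφ : Function.Injective φ) :
    n ≤ (Λ \ ⋃ i : Fin m, (fun x => q * lam i + x) '' Λ).ncard :=
  rational_places_bound_general q hq v hv_mul hv_add hv_top hv_res R hR Λ hΛ m lam hlam_pos hgen n φ
    hφ
end

section
/- Let 𝔽q, F, v, R, Λ be as in the context and suppose Λ is generated by m positive integers λ1 < … < λm. If φ1, …, φn : R → 𝔽q are pairwise distinct 𝔽q-algebra homomorphisms, then n ≤ q^m. (In the function-field situation: a function field over 𝔽q with a rational place whose Weierstrass semigroup is generated by m elements has at most q^m + 1 rational places.) -/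
/-! Let `f i ∈ R` have a pole of order exactly `λ i`. Since every pole order occurring in `R` is
a sum `∑ a i * λ i`, any `g ∈ R` has the same pole order as a monomial `h = ∏ f i ^ a i`; as the
residue field is `𝔽q`, some `g - c * h` has a pole of smaller order, and it lies in `R`, whose
nonzero elements all have a pole. Induction on the pole order shows that the `f i` generate `R`
as an `𝔽q`-algebra, so an `𝔽q`-algebra map `R → 𝔽q` is determined by the `m` values `φ (f i)`. -/

lemma WithTop.exists_eq_neg_natCast_s2 {x : WithTop ℤ} (hx : x ≠ ⊤) (hx0 : x ≤ 0) :
    ∃ N : ℕ, x = ((-(N : ℤ) : ℤ) : WithTop ℤ) := by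
  lift x to ℤ using hx
  exact ⟨(-x).toNat, by norm_cast at hx0 ⊢; omega⟩

namespace WeierstrassSemigroup

variable {F : Type*} [Field F] (v : F → WithTop ℤ)

lemma val_one_eq_zero (hv_mul : ∀ f g : F, v (f * g) = v f + v g)
    (hv_top : ∀ f : F, v f = ⊤ ↔ f = 0) : v 1 = 0 := by
  have hv1 : v 1 ≠ ⊤ := (hv_top 1).not.mpr one_ne_zero
  exact WithTop.add_right_cancel hv1 (by rw [zero_add, ← hv_mul, one_mul])

lemma val_pow (hv_mul : ∀ f g : F, v (f * g) = v f + v g) (hv_one : v 1 = 0) (g : F) (k : ℕ) :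
    v (g ^ k) = k • v g := by
  induction k with
  | zero => simpa using hv_one
  | succ k ih => rw [pow_succ, hv_mul, ih, succ_nsmul]

lemma val_prod (hv_mul : ∀ f g : F, v (f * g) = v f + v g) (hv_one : v 1 = 0) {ι : Type*}
    (s : Finset ι) (g : ι → F) : v (∏ i ∈ s, g i) = ∑ i ∈ s, v (g i) := by
  classical
  induction s using Finset.induction with
  | empty => simpa using hv_one
  | insert i s hi ih => rw [Finset.prod_insert hi, Finset.sum_insert hi, hv_mul, ih]

variable {K : Type*} [Field K] [Algebra K F]

lemma exists_val_lt_val_sub_mul (hv_mul : ∀ f g : F, v (f * g) = v f + v g)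
    (hv_top : ∀ f : F, v f = ⊤ ↔ f = 0)
    (hv_res : ∀ f : F, 0 ≤ v f → ∃ c : K, 0 < v (f - algebraMap K F c))
    {g h : F} (hh : h ≠ 0) (hgh : v g = v h) : ∃ c : K, v g < v (g - algebraMap K F c * h) := by
  have hvh : v h ≠ ⊤ := (hv_top h).not.mpr hh
  have hunit : v (g * h⁻¹) = 0 :=
    WithTop.add_right_cancel hvh (by rw [← hv_mul, inv_mul_cancel_right₀ hh, hgh, zero_add])
  obtain ⟨c, hc⟩ := hv_res _ hunit.ge
  refine ⟨c, ?_⟩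
  calc v g = 0 + v h := by rw [zero_add, hgh]
    _ < v (g * h⁻¹ - algebraMap K F c) + v h := WithTop.add_lt_add_right hvh hc
    _ = v (g - algebraMap K F c * h) := by rw [← hv_mul, sub_mul, inv_mul_cancel_right₀ hh]

lemma exists_val_eq_neg_natCast (hv_top : ∀ f : F, v f = ⊤ ↔ f = 0) {R : Subalgebra K F}
    (hR : ∀ f ∈ R, f ≠ 0 → v f ≤ 0) {g : F} (hg : g ∈ R) (hg0 : g ≠ 0) :
    ∃ N : ℕ, v g = ((-(N : ℤ) : ℤ) : WithTop ℤ) :=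
  WithTop.exists_eq_neg_natCast_s2 ((hv_top g).not.mpr hg0) (hR g hg hg0)

theorem le_of_forall_exists_val_eq (hv_mul : ∀ f g : F, v (f * g) = v f + v g)
    (hv_top : ∀ f : F, v f = ⊤ ↔ f = 0)
    (hv_res : ∀ f : F, 0 ≤ v f → ∃ c : K, 0 < v (f - algebraMap K F c))
    {R S : Subalgebra K F} (hSR : S ≤ R) (hR : ∀ f ∈ R, f ≠ 0 → v f ≤ 0)
    (hS : ∀ g ∈ R, g ≠ 0 → ∃ h ∈ S, v h = v g) : R ≤ S := by
  suffices key : ∀ N : ℕ, ∀ g ∈ R, v g = ((-(N : ℤ) : ℤ) : WithTop ℤ) → g ∈ S by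
    intro g hg
    rcases eq_or_ne g 0 with rfl | hg0
    · exact zero_mem S
    obtain ⟨N, hN⟩ := exists_val_eq_neg_natCast v hv_top hR hg hg0
    exact key N g hg hN
  intro N
  induction N using Nat.strong_induction_on with | _ N ih => ?_
  intro g hg hgN
  have hg0 : g ≠ 0 := by
    rintro rfl
    rw [(hv_top 0).mpr rfl] at hgN
    exact WithTop.top_ne_coe hgN
  obtain ⟨h, hhS, hhg⟩ := hS g hg hg0
  have hh0 : h ≠ 0 := by
    rintro rfl
    exact hg0 ((hv_top g).mp (by rw [← hhg, (hv_top 0).mpr rfl]))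
  obtain ⟨c, hc⟩ := exists_val_lt_val_sub_mul v hv_mul hv_top hv_res hh0 hhg.symm
  have hchS : algebraMap K F c * h ∈ S := mul_mem (S.algebraMap_mem c) hhS
  rw [← sub_add_cancel g (algebraMap K F c * h)]
  refine add_mem ?_ hchS
  rcases eq_or_ne (g - algebraMap K F c * h) 0 with hzero | hne
  · rw [hzero]
    exact zero_mem S
  have hsubR : g - algebraMap K F c * h ∈ R := sub_mem hg (hSR hchS)
  obtain ⟨N', hN'⟩ := exists_val_eq_neg_natCast v hv_top hR hsubR hne
  refine ih N' ?_ _ hsubR hN'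
  rw [hgN, hN'] at hc
  have := WithTop.coe_lt_coe.mp hc
  omega

theorem le_adjoin_of_val_eq_neg (hv_mul : ∀ f g : F, v (f * g) = v f + v g)
    (hv_top : ∀ f : F, v f = ⊤ ↔ f = 0)
    (hv_res : ∀ f : F, 0 ≤ v f → ∃ c : K, 0 < v (f - algebraMap K F c))
    {R : Subalgebra K F} (hR : ∀ f ∈ R, f ≠ 0 → v f ≤ 0)
    {ι : Type*} [Fintype ι] (lam : ι → ℕ) (f : ι → F) (hfR : ∀ i, f i ∈ R)
    (hfv : ∀ i, v (f i) = ((-(lam i : ℤ) : ℤ) : WithTop ℤ))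
    (hsemigroup : ∀ N : ℕ, (∃ g ∈ R, g ≠ 0 ∧ v g = ((-(N : ℤ) : ℤ) : WithTop ℤ)) →
      ∃ a : ι → ℕ, N = ∑ i, a i * lam i) :
    R ≤ Algebra.adjoin K (Set.range f) := by
  refine le_of_forall_exists_val_eq v hv_mul hv_top hv_res
    (Algebra.adjoin_le (Set.range_subset_iff.mpr hfR)) hR fun g hg hg0 => ?_
  obtain ⟨N, hN⟩ := exists_val_eq_neg_natCast v hv_top hR hg hg0
  obtain ⟨a, rfl⟩ := hsemigroup N ⟨g, hg, hg0, hN⟩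
  have hv_one := val_one_eq_zero v hv_mul hv_top
  refine ⟨∏ i, f i ^ a i,
    prod_mem fun i _ => pow_mem (Algebra.subset_adjoin (Set.mem_range_self i)) _, ?_⟩
  rw [hN, val_prod v hv_mul hv_one]
  simp only [val_pow v hv_mul hv_one, hfv]
  norm_cast
  simp only [Int.nsmul_eq_mul, mul_neg, Finset.sum_neg_distrib, Nat.cast_sum, Nat.cast_mul]

end WeierstrassSemigroup

theorem rational_places_le_q_pow_m_general
    {Fq : Type*} [Field Fq] [Fintype Fq]
    {F : Type*} [Field F] [Algebra Fq F]
    (q : ℕ) (hq : q = Fintype.card Fq)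
    (v : F → WithTop ℤ)
    (hv_mul : ∀ f g : F, v (f * g) = v f + v g)
    (hv_top : ∀ f : F, v f = ⊤ ↔ f = 0)
    (hv_res : ∀ f : F, 0 ≤ v f → ∃ c : Fq, 0 < v (f - algebraMap Fq F c))
    (R : Subalgebra Fq F)
    (hR : ∀ f ∈ R, f ≠ 0 → v f ≤ 0)
    (Λ : Set ℕ)
    (hΛ : Λ = {n : ℕ | ∃ f ∈ R, f ≠ 0 ∧ v f = ((-(n : ℤ) : ℤ) : WithTop ℤ)})
    (m : ℕ) (lam : Fin m → ℕ)
    (hgen : Λ = {n : ℕ | ∃ a : Fin m → ℕ, n = ∑ i, a i * lam i})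
    (n : ℕ) (φ : Fin n → (R →ₐ[Fq] Fq))
    (hφ : Function.Injective φ) :
    n ≤ q ^ m := by
  have hpoles := hΛ.symm.trans hgen
  have hlam : ∀ i, lam i ∈ {n : ℕ | ∃ f ∈ R, f ≠ 0 ∧ v f = ((-(n : ℤ) : ℤ) : WithTop ℤ)} :=
    fun i => hpoles.symm.subset ⟨Pi.single i 1, by simp [Pi.single_apply]⟩
  choose f hfR _ hfv using hlam
  have hRf : R = Algebra.adjoin Fq (Set.range f) :=
    le_antisymm
      (WeierstrassSemigroup.le_adjoin_of_val_eq_neg v hv_mul hv_top hv_res hR lam f hfR hfv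
        fun _ hN => hpoles.subset hN)
      (Algebra.adjoin_le (Set.range_subset_iff.mpr hfR))
  have heval : Function.Injective fun k i => φ k ⟨f i, hfR i⟩ := fun k k' hkk =>
    hφ (AlgHom.ext_of_eq_adjoin hRf (by rintro _ ⟨i, rfl⟩; exact congrFun hkk i))
  calc n = Fintype.card (Fin n) := (Fintype.card_fin n).symm
    _ ≤ Fintype.card (Fin m → Fq) := Fintype.card_le_of_injective _ heval
    _ = q ^ m := by simp [hq]

/-- With `Fq`, `F`, `v`, `R`, `Λ` as in the context and `Λ`
generated by `m` positive integers `λ 0 < … < λ (m-1)`, if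
`φ 1, …, φ n : R → Fq` are pairwise distinct `Fq`-algebra homomorphisms then
`n ≤ q ^ m`. -/
theorem rational_places_le_q_pow_m
    {Fq : Type*} [Field Fq] [Fintype Fq]
    {F : Type*} [Field F] [Algebra Fq F]
    (q : ℕ) (hq : q = Fintype.card Fq)
    (v : F → WithTop ℤ)
    (hv_mul : ∀ f g : F, v (f * g) = v f + v g)
    (hv_add : ∀ f g : F, min (v f) (v g) ≤ v (f + g))
    (hv_top : ∀ f : F, v f = ⊤ ↔ f = 0)
    (hv_const : ∀ c : Fq, c ≠ 0 → v (algebraMap Fq F c) = 0)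
    (hv_res : ∀ f : F, 0 ≤ v f → ∃ c : Fq, 0 < v (f - algebraMap Fq F c))
    (R : Subalgebra Fq F)
    (hR : ∀ f ∈ R, f ≠ 0 → v f ≤ 0)
    (Λ : Set ℕ)
    (hΛ : Λ = {n : ℕ | ∃ f ∈ R, f ≠ 0 ∧ v f = ((-(n : ℤ) : ℤ) : WithTop ℤ)})
    (hgaps : (Λᶜ : Set ℕ).Finite)
    (m : ℕ) (lam : Fin m → ℕ)
    (hlam_pos : ∀ i, 0 < lam i)
    (hlam_mono : StrictMono lam)
    (hgen : Λ = {n : ℕ | ∃ a : Fin m → ℕ, n = ∑ i, a i * lam i})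
    (n : ℕ) (φ : Fin n → (R →ₐ[Fq] Fq))
    (hφ : Function.Injective φ) :
    n ≤ q ^ m :=
  rational_places_le_q_pow_m_general q hq v hv_mul hv_top hv_res R hR Λ hΛ m lam hgen n φ hφ
end

section
/- Let Λ be a numerical semigroup of genus g generated by positive integers λ1 < … < λm, and let q be a positive integer. Then q·λ1 + 1 − g ≤ #(Λ \ ∪_{i=1}^{m} (q·λi + Λ)) + 1 ≤ min{q·λ1 + 1, q^m + 1}. -/
/-- Proposition 1: For a numerical semigroup `Λ` of genus `g`
generated by positive integers `λ 0 < … < λ (m-1)` and a positive integer `q`,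
`q·λ₁ + 1 − g ≤ #(Λ \ ⋃ i, (q·λ i + Λ)) + 1 ≤ min (q·λ₁ + 1) (q^m + 1)`. -/
theorem bound_on_the_bound
    (Λ : Set ℕ) (hfin : (Λᶜ : Set ℕ).Finite)
    (g : ℕ) (hg : g = (Λᶜ : Set ℕ).ncard)
    (q : ℕ) (hq : 0 < q)
    (m : ℕ) (hm : 0 < m)
    (lam : Fin m → ℕ)
    (hlam_pos : ∀ i, 0 < lam i)
    (hlam_mono : StrictMono lam)
    (hgen : Λ = {n : ℕ | ∃ a : Fin m → ℕ, n = ∑ i, a i * lam i}) :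
    ((q * lam ⟨0, hm⟩ : ℕ) : ℤ) + 1 - (g : ℤ) ≤
        (((Λ \ ⋃ i : Fin m, (fun x => q * lam i + x) '' Λ).ncard + 1 : ℕ) : ℤ) ∧
      (Λ \ ⋃ i : Fin m, (fun x => q * lam i + x) '' Λ).ncard + 1 ≤
        min (q * lam ⟨0, hm⟩ + 1) (q ^ m + 1) := by
  classical
  set i0 : Fin m := ⟨0, hm⟩ with hi0
  set T : Fin m → Set ℕ := fun i => (fun x => q * lam i + x) '' Λ with hTdef
  set S : Set ℕ := Λ \ ⋃ i, T i with hSdef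
  set L1 := q * lam i0 with hL1
  have hmem : ∀ x, x ∈ Λ ↔ ∃ a : Fin m → ℕ, x = ∑ i, a i * lam i := by
    intro x; rw [hgen]; exact Iff.rfl
  have hadd : ∀ x ∈ Λ, ∀ y ∈ Λ, x + y ∈ Λ := by
    intro x hx y hy
    rcases (hmem x).1 hx with ⟨a, rfl⟩
    rcases (hmem y).1 hy with ⟨b, rfl⟩
    exact (hmem _).2 ⟨a + b, by simp [add_mul, Finset.sum_add_distrib]⟩
  have hqlam : ∀ i, q * lam i ∈ Λ := by
    intro i
    refine (hmem _).2 ⟨fun j => if j = i then q else 0, ?_⟩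
    simp [ite_mul]
  have hL1le : ∀ i, L1 ≤ q * lam i := by
    intro i
    have : lam i0 ≤ lam i := hlam_mono.monotone (by simp [hi0, Fin.le_def])
    exact Nat.mul_le_mul_left _ this
  have hTmem : ∀ i x, x ∈ T i ↔ q * lam i ≤ x ∧ x - q * lam i ∈ Λ := by
    intro i x
    constructor
    · rintro ⟨y, hy, rfl⟩; exact ⟨Nat.le_add_right _ _, by simpa using hy⟩
    · rintro ⟨h1, h2⟩
      exact ⟨x - q * lam i, h2, show q * lam i + (x - q * lam i) = x by omega⟩
  have hT0c : (T i0)ᶜ = Set.Iio L1 ∪ (fun x => L1 + x) '' Λᶜ := by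
    ext n
    simp only [Set.mem_compl_iff, Set.mem_union, Set.mem_Iio, Set.mem_image,
      Set.mem_compl_iff, hTmem i0 n, ← hL1]
    constructor
    · intro h
      by_cases hn : n < L1
      · exact Or.inl hn
      · exact Or.inr ⟨n - L1, fun hc => h ⟨by omega, hc⟩, by omega⟩
    · rintro (h | ⟨y, hy, rfl⟩) ⟨h1, h2⟩
      · omega
      · exact hy (by simpa using h2)
  have himfin : ((fun x => L1 + x) '' Λᶜ).Finite := hfin.image _
  have hT0cfin : ((T i0)ᶜ).Finite := by
    rw [hT0c]; exact (Set.finite_Iio _).union himfin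
  have h1 : (Set.Iio L1 : Set ℕ).ncard = L1 := by
    rw [← Finset.coe_range, Set.ncard_coe_finset, Finset.card_range]
  have h2 : ((fun x => L1 + x) '' Λᶜ).ncard = g := by
    rw [Set.ncard_image_of_injective _ (add_right_injective L1), hg]
  have hdisj : Disjoint (Set.Iio L1 : Set ℕ) ((fun x => L1 + x) '' Λᶜ) := by
    rw [Set.disjoint_left]
    rintro n hn ⟨y, -, rfl⟩
    simp only [Set.mem_Iio] at hn; omega
  have hT0ccard : ((T i0)ᶜ).ncard = L1 + g := by
    rw [hT0c, Set.ncard_union_eq hdisj (Set.finite_Iio _) himfin, h1, h2]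
  have hT0sub : T i0 ⊆ Λ := by
    rintro x ⟨y, hy, rfl⟩; exact hadd _ (hqlam i0) _ hy
  have hsplit : (T i0)ᶜ = Λᶜ ∪ (Λ \ T i0) := by
    ext n
    simp only [Set.mem_compl_iff, Set.mem_union, Set.mem_diff]
    constructor
    · intro h
      by_cases hn : n ∈ Λ
      · exact Or.inr ⟨hn, h⟩
      · exact Or.inl hn
    · rintro (h | ⟨-, h⟩) hc
      · exact h (hT0sub hc)
      · exact h hc
  have hDfin : (Λ \ T i0).Finite := hT0cfin.subset (fun x hx => hx.2)
  have hdisj2 : Disjoint (Λᶜ) (Λ \ T i0) :=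
    Set.disjoint_left.2 (fun n hn hn2 => hn hn2.1)
  have hDcard : (Λ \ T i0).ncard = L1 := by
    have h := hT0ccard
    rw [hsplit, Set.ncard_union_eq hdisj2 hfin hDfin, ← hg] at h
    omega
  have hSsub : S ⊆ Λ \ T i0 :=
    fun x hx => ⟨hx.1, fun hc => hx.2 (Set.mem_iUnion.2 ⟨i0, hc⟩)⟩
  have hSfin : S.Finite := hDfin.subset hSsub
  set R : Set ℕ := (Λ \ T i0) \ S with hRdef
  have hRfin : R.Finite := hDfin.subset (fun x hx => hx.1)
  have hSR : S.ncard + R.ncard = L1 := by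
    rw [← Set.ncard_union_eq Set.disjoint_sdiff_right hSfin hRfin,
      Set.union_diff_cancel hSsub, hDcard]
  have hRge : ∀ x ∈ R, L1 ≤ x ∧ x - L1 ∉ Λ := by
    rintro x ⟨⟨hxΛ, hxT0⟩, hxS⟩
    have hxU : x ∈ ⋃ i, T i := by
      by_contra hc; exact hxS ⟨hxΛ, hc⟩
    rcases Set.mem_iUnion.1 hxU with ⟨i, hi⟩
    have hge : q * lam i ≤ x := ((hTmem i x).1 hi).1
    have hge1 : L1 ≤ x := le_trans (hL1le i) hge
    refine ⟨hge1, fun hc => hxT0 ((hTmem i0 x).2 ⟨by omega, by rwa [← hL1]⟩)⟩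
  have hRg : R.ncard ≤ g := by
    rw [hg]
    refine Set.ncard_le_ncard_of_injOn (fun x => x - L1)
      (fun x hx => (hRge x hx).2) ?_ hfin
    intro a ha b hb hab
    have h1 := (hRge a ha).1
    have h2 := (hRge b hb).1
    simp only at hab
    omega
  -- representation function
  let rep : ℕ → (Fin m → ℕ) := fun x =>
    if h : ∃ a : Fin m → ℕ, x = ∑ i, a i * lam i then h.choose else 0
  have hrep : ∀ x ∈ Λ, x = ∑ i, rep x i * lam i := by
    intro x hx
    have h := (hmem x).1 hx
    simp only [rep, dif_pos h]
    exact h.choose_spec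
  have hrepq : ∀ x ∈ S, ∀ i, rep x i < q := by
    intro x hx i
    by_contra hc
    push_neg at hc
    apply hx.2
    refine Set.mem_iUnion.2 ⟨i, (hTmem i x).2 ⟨?_, ?_⟩⟩
    · calc q * lam i ≤ rep x i * lam i := Nat.mul_le_mul_right _ hc
        _ ≤ ∑ j, rep x j * lam j :=
          Finset.single_le_sum (f := fun j => rep x j * lam j)
            (fun j _ => Nat.zero_le _) (Finset.mem_univ i)
        _ = x := (hrep x hx.1).symm
    · refine (hmem _).2 ⟨Function.update (rep x) i (rep x i - q), ?_⟩
      have hx' := hrep x hx.1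
      have heq : (fun j => Function.update (rep x) i (rep x i - q) j * lam j)
          = Function.update (fun j => rep x j * lam j) i ((rep x i - q) * lam i) := by
        ext j
        by_cases h : j = i <;> simp [Function.update_apply, h]
      rw [show (∑ j, Function.update (rep x) i (rep x i - q) j * lam j)
          = ∑ j, Function.update (fun j => rep x j * lam j) i ((rep x i - q) * lam i) j
          from by rw [← heq],
        Finset.sum_update_of_mem (Finset.mem_univ i)]
      have hx'' : x = rep x i * lam i + ∑ j ∈ Finset.univ \ {i}, rep x j * lam j := by
        conv_lhs => rw [hx']
        rw [Finset.sdiff_singleton_eq_erase]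
        exact (Finset.add_sum_erase _ _ (Finset.mem_univ i)).symm
      have hmul : (rep x i - q) * lam i + q * lam i = rep x i * lam i := by
        rw [← Nat.add_mul]; congr 1; omega
      omega
  have hSqm : S.ncard ≤ q ^ m := by
    have hle := Set.ncard_le_ncard_of_injOn (s := S)
      (fun x (i : Fin m) => (⟨rep x i % q, Nat.mod_lt _ hq⟩ : Fin q))
      (fun a _ => Set.mem_univ _) ?_ Set.finite_univ
    · calc S.ncard ≤ (Set.univ : Set (Fin m → Fin q)).ncard := hle
        _ = q ^ m := by
          simp [Set.ncard_univ, Nat.card_eq_fintype_card]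
    · intro a ha b hb hab
      rw [hrep a ha.1, hrep b hb.1]
      refine Finset.sum_congr rfl (fun i _ => ?_)
      have h := congrArg Fin.val (congrFun hab i)
      simp only at h
      rw [Nat.mod_eq_of_lt (hrepq a ha i), Nat.mod_eq_of_lt (hrepq b hb i)] at h
      rw [h]
  refine ⟨?_, le_min (by omega) (by omega)⟩
  have h : L1 ≤ S.ncard + g := by omega
  push_cast
  omega
end

section
/- Let Λ be a numerical semigroup generated by positive integers λ1 < … < λm, let q be a positive integer, and set t = #{λ ∈ Λ : λ1 + 1 ≤ λ ≤ λ1 + ⌈λ1/q⌉ − 1}, where ⌈λ1/q⌉ is the ceiling of λ1/q. Then #(Λ \ ∪_{i=1}^{m} (q·λi + Λ)) + 1 ≤ q·λ1 − t + 1. -/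
/-- Corollary 2: For a numerical semigroup `Λ` generated by
positive integers `λ 0 < … < λ (m-1)`, a positive integer `q`, and
`t = #{λ ∈ Λ : λ₁ + 1 ≤ λ ≤ λ₁ + ⌈λ₁/q⌉ − 1}` one has
`#(Λ \ ⋃ i, (q·λ i + Λ)) + 1 ≤ q·λ₁ − t + 1`.
Here `⌈λ₁/q⌉ = (λ₁ + q − 1)/q` (natural division). -/
theorem bound_with_t
    (Λ : Set ℕ) (hfin : (Λᶜ : Set ℕ).Finite)
    (q : ℕ) (hq : 0 < q)
    (m : ℕ) (hm : 0 < m)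
    (lam : Fin m → ℕ)
    (hlam_pos : ∀ i, 0 < lam i)
    (hlam_mono : StrictMono lam)
    (hgen : Λ = {n : ℕ | ∃ a : Fin m → ℕ, n = ∑ i, a i * lam i})
    (t : ℕ)
    (ht : t = {x : ℕ | x ∈ Λ ∧ lam ⟨0, hm⟩ + 1 ≤ x ∧
      x ≤ lam ⟨0, hm⟩ + (lam ⟨0, hm⟩ + q - 1) / q - 1}.ncard) :
    (((Λ \ ⋃ i : Fin m, (fun x => q * lam i + x) '' Λ).ncard + 1 : ℕ) : ℤ) ≤
      (q : ℤ) * (lam ⟨0, hm⟩ : ℤ) - (t : ℤ) + 1 := by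
  set i0 : Fin m := ⟨0, hm⟩ with hi0
  set l0 : ℕ := lam i0 with hl0
  have hl0pos : 0 < l0 := hlam_pos i0
  set c : ℕ := q * l0 with hcdef
  have hc : 0 < c := Nat.mul_pos hq hl0pos
  -- basic membership facts
  have hmemgen : ∀ i : Fin m, lam i ∈ Λ := by
    intro i; rw [hgen]
    exact ⟨fun j => if j = i then 1 else 0, by simp⟩
  have hzero : (0 : ℕ) ∈ Λ := by
    rw [hgen]; exact ⟨fun _ => 0, by simp⟩
  have hadd : ∀ x ∈ Λ, ∀ y ∈ Λ, x + y ∈ Λ := by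
    rw [hgen]; rintro x ⟨a, rfl⟩ y ⟨b, rfl⟩
    exact ⟨fun i => a i + b i, by rw [← Finset.sum_add_distrib]; simp [add_mul]⟩
  have hsmul : ∀ k : ℕ, ∀ x ∈ Λ, k * x ∈ Λ := by
    rw [hgen]; rintro k x ⟨a, rfl⟩
    exact ⟨fun i => k * a i, by rw [Finset.mul_sum]; simp [mul_assoc]⟩
  have hcmem : c ∈ Λ := hsmul q l0 (hmemgen i0)
  -- minimality of l0
  have hl0le : ∀ i : Fin m, l0 ≤ lam i := by
    intro i
    rcases eq_or_lt_of_le (show i0 ≤ i from by rw [Fin.le_def]; exact Nat.zero_le _) with h | h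
    · rw [← h]
    · exact le_of_lt (hlam_mono h)
  have hmin : ∀ x ∈ Λ, x ≠ 0 → l0 ≤ x := by
    intro x hx hx0
    rw [hgen] at hx
    obtain ⟨a, rfl⟩ := hx
    have : ∃ i, a i ≠ 0 := by
      by_contra h
      push_neg at h
      simp [h] at hx0
    obtain ⟨i, hi⟩ := this
    calc l0 ≤ lam i := hl0le i
      _ ≤ a i * lam i := Nat.le_mul_of_pos_left _ (Nat.pos_of_ne_zero hi)
      _ ≤ ∑ j, a j * lam j :=
          Finset.single_le_sum (f := fun j => a j * lam j)
            (fun j _ => Nat.zero_le _) (Finset.mem_univ i)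
  -- small elements of Λ are generators
  have hsmall : ∀ x ∈ Λ, 0 < x → x < 2 * l0 → ∃ i, x = lam i := by
    intro x hx hx0 hx2
    rw [hgen] at hx
    obtain ⟨a, rfl⟩ := hx
    have hsum : ∑ i, a i = 1 := by
      rcases Nat.lt_or_ge (∑ i, a i) 2 with h | h
      · interval_cases h' : (∑ i, a i)
        · simp only [Finset.sum_eq_zero_iff, Finset.mem_univ, forall_true_left] at h'
          simp [h'] at hx0
        · rfl
      · exfalso
        have : 2 * l0 ≤ ∑ i, a i * lam i := by
          calc 2 * l0 ≤ (∑ i, a i) * l0 := Nat.mul_le_mul_right _ h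
            _ = ∑ i, a i * l0 := Finset.sum_mul _ _ _
            _ ≤ ∑ i, a i * lam i :=
                Finset.sum_le_sum (fun i _ => Nat.mul_le_mul_left _ (hl0le i))
        omega
    obtain ⟨i, hi, hone⟩ : ∃ i, a i ≠ 0 ∧ a i = 1 := by
      by_contra h
      push_neg at h
      have : ∀ i, a i = 0 := by
        intro i
        by_contra hne
        have h1 : a i = 1 := by
          have : a i ≤ ∑ j, a j :=
            Finset.single_le_sum (fun j _ => Nat.zero_le _) (Finset.mem_univ i)
          omega
        exact h i hne h1
      simp [this] at hsum
    refine ⟨i, ?_⟩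
    have hothers : ∀ j, j ≠ i → a j = 0 := by
      intro j hj
      by_contra hne
      have h1 : a i + a j ≤ ∑ k, a k := by
        have := Finset.add_sum_erase Finset.univ a (Finset.mem_univ i)
        have hj' : j ∈ Finset.univ.erase i := Finset.mem_erase.mpr ⟨hj, Finset.mem_univ j⟩
        have h2 : a j ≤ ∑ k ∈ Finset.univ.erase i, a k :=
          Finset.single_le_sum (fun k _ => Nat.zero_le _) hj'
        omega
      omega
    rw [Finset.sum_eq_single i (fun j _ hj => by rw [hothers j hj, Nat.zero_mul])
      (fun h => absurd (Finset.mem_univ i) h), hone, Nat.one_mul]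
  -- name the relevant sets
  set U : Set ℕ := ⋃ i : Fin m, (fun x => q * lam i + x) '' Λ with hU
  set A : Set ℕ := Λ \ ((fun x => c + x) '' Λ) with hA
  set S : Set ℕ := Λ \ U with hS
  set T : Set ℕ := {x : ℕ | x ∈ Λ ∧ l0 + 1 ≤ x ∧ x ≤ l0 + (l0 + q - 1) / q - 1} with hT
  set T' : Set ℕ := (fun x => q * x) '' T with hT'
  set d : ℕ := (l0 + q - 1) / q with hd
  have hd1 : 1 ≤ d := by
    rw [hd, Nat.le_div_iff_mul_le hq]
    omega
  have hqd : q * d ≤ l0 + q - 1 := by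
    rw [hd, Nat.mul_comm]
    exact Nat.div_mul_le_self _ _
  have hdl0 : d ≤ l0 := by
    by_contra h
    push_neg at h
    have h1 : q * (l0 + 1) ≤ q * d := Nat.mul_le_mul_left _ h
    have h2 : q * (l0 + 1) = q * l0 + q := by ring
    have h3 : l0 ≤ q * l0 := Nat.le_mul_of_pos_left _ hq
    omega
  -- A is finite with at most c elements, via injectivity of mod c
  have hinj : Set.InjOn (· % c) A := by
    have key : ∀ x ∈ A, ∀ y ∈ A, x < y → x % c ≠ y % c := by
      intro x hx y hy hxy heq
      have hdvd : c ∣ y - x := (Nat.modEq_iff_dvd' (le_of_lt hxy)).mp heq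
      obtain ⟨k, hk⟩ := hdvd
      have hk1 : 1 ≤ k := by
        rcases Nat.eq_zero_or_pos k with h | h
        · subst h; simp at hk; omega
        · exact h
      have hy2 : y = c + (x + c * (k - 1)) := by
        have : c * k = c + c * (k - 1) := by
          conv_lhs => rw [show k = 1 + (k - 1) by omega]
          ring
        omega
      have hmem : x + c * (k - 1) ∈ Λ :=
        hadd x hx.1 _ (by rw [Nat.mul_comm]; exact hsmul (k - 1) c hcmem)
      exact hy.2 ⟨x + c * (k - 1), hmem, hy2.symm⟩
    intro x hx y hy heq
    rcases lt_trichotomy x y with h | h | h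
    · exact absurd heq (key x hx y hy h)
    · exact h
    · exact absurd heq.symm (key y hy x hx h)
  have hAim : (· % c) '' A ⊆ Set.Iio c := by
    rintro _ ⟨x, -, rfl⟩
    exact Nat.mod_lt _ hc
  have hAfin : A.Finite :=
    Set.Finite.of_finite_image ((Set.finite_Iio c).subset hAim) hinj
  have hAcard : A.ncard ≤ c := by
    calc A.ncard = ((· % c) '' A).ncard := (Set.ncard_image_of_injOn hinj).symm
      _ ≤ (Set.Iio c).ncard := Set.ncard_le_ncard hAim (Set.finite_Iio c)
      _ = c := by
          rw [show Set.Iio c = ↑(Finset.range c) by ext n; simp,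
            Set.ncard_coe_finset, Finset.card_range]
  -- T' ⊆ A
  have hT'A : T' ⊆ A := by
    rintro _ ⟨x, ⟨hxΛ, hx1, hx2⟩, rfl⟩
    constructor
    · exact hsmul q x hxΛ
    · rintro ⟨μ, hμΛ, hμeq⟩
      -- μ = q * (x - l0)
      have hxl0 : l0 ≤ x := by omega
      have heq2 : q * x = c + q * (x - l0) := by
        rw [hcdef, ← Nat.mul_add]
        congr 1
        omega
      have hμ : μ = q * (x - l0) := by
        have := hμeq
        simp only at this
        omega
      have hμpos : μ ≠ 0 := by
        have : 1 ≤ x - l0 := by omega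
        have := Nat.mul_le_mul_left q this
        omega
      have hμge : l0 ≤ μ := hmin μ hμΛ hμpos
      have hμle : μ ≤ l0 - 1 := by
        have h1 : x - l0 ≤ d - 1 := by omega
        have h2 : q * (x - l0) ≤ q * (d - 1) := Nat.mul_le_mul_left q h1
        have h3 : q * (d - 1) = q * d - q := by
          rw [Nat.mul_sub, Nat.mul_one]
        omega
      omega
  -- T' ⊆ U
  have hT'U : T' ⊆ U := by
    rintro _ ⟨x, ⟨hxΛ, hx1, hx2⟩, rfl⟩
    have hx2l0 : x < 2 * l0 := by omega
    obtain ⟨i, rfl⟩ := hsmall x hxΛ (by omega) hx2l0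
    rw [hU]
    exact Set.mem_iUnion.mpr ⟨i, ⟨0, hzero, by simp⟩⟩
  -- S ⊆ A
  have hSA : S ⊆ A := by
    rintro x ⟨hxΛ, hxU⟩
    refine ⟨hxΛ, ?_⟩
    rintro ⟨y, hyΛ, rfl⟩
    exact hxU (Set.mem_iUnion.mpr ⟨i0, ⟨y, hyΛ, by rw [hcdef]⟩⟩)
  have hSfin : S.Finite := hAfin.subset hSA
  have hT'fin : T'.Finite := hAfin.subset hT'A
  have hdisj : Disjoint S T' := by
    rw [Set.disjoint_left]
    rintro x ⟨-, hxU⟩ hxT'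
    exact hxU (hT'U hxT')
  -- counting
  have hTfin : T.Finite := by
    apply (Set.finite_Iic (l0 + d - 1)).subset
    rintro x ⟨-, -, hx2⟩
    exact hx2
  have hT'card : T'.ncard = t := by
    rw [hT', Set.ncard_image_of_injective T
      (fun a b h => Nat.eq_of_mul_eq_mul_left hq h), ht]
  have hunion : S.ncard + T'.ncard ≤ A.ncard := by
    rw [← Set.ncard_union_eq hdisj hSfin hT'fin]
    exact Set.ncard_le_ncard (Set.union_subset hSA hT'A) hAfin
  have hfinal : S.ncard + t ≤ q * l0 := by
    rw [← hT'card]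
    calc S.ncard + T'.ncard ≤ A.ncard := hunion
      _ ≤ c := hAcard
  have hcast : ((q * l0 : ℕ) : ℤ) = (q : ℤ) * (l0 : ℤ) := by push_cast; ring
  push_cast
  omega
end

section
/- Fix an integer g ≥ 0, let Λ = {0} ∪ {n ∈ ℕ : n ≥ g + 1} (the numerical semigroup of genus g with multiplicity g + 1, generated by λ1 = g+1, λ2 = g+2, …, λ_{g+1} = 2g+1), and let q be a positive integer. Then #(Λ \ ∪_{i=1}^{g+1} (q·λi + Λ)) + 1 = q(g + 1) + 2 − ⌈(g+1)/q⌉, where ⌈(g+1)/q⌉ is the ceiling of (g+1)/q. -/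
/-- Example 4: For the numerical semigroup
`Λ = {0} ∪ {n : n ≥ g+1}` of genus `g` (with multiplicity `g+1`, generated by
`λ_i = g + i` for `i = 1, …, g+1`) and a positive integer `q`,
`#(Λ \ ⋃_{i=1}^{g+1} (q·(g+i) + Λ)) + 1 = q(g+1) + 2 − ⌈(g+1)/q⌉`.
Here `⌈(g+1)/q⌉ = (g + q)/q` (natural division). -/
theorem ordinary_semigroup_count
    (g : ℕ) (q : ℕ) (hq : 0 < q)
    (Λ : Set ℕ) (hΛ : Λ = {0} ∪ {n : ℕ | g + 1 ≤ n}) :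
    (((Λ \ ⋃ i ∈ Finset.Icc 1 (g + 1), (fun x => q * (g + i) + x) '' Λ).ncard
        + 1 : ℕ) : ℤ) =
      (q : ℤ) * ((g : ℤ) + 1) + 2 - (((g + q) / q : ℕ) : ℤ) := by
  subst hΛ
  set Λ : Set ℕ := {0} ∪ {n : ℕ | g + 1 ≤ n} with hΛ
  have hmem : ∀ n, n ∈ Λ ↔ n = 0 ∨ g + 1 ≤ n := by
    intro n; simp [hΛ]
  set N := q * (g + 1) + (g + 1) with hN
  set k := g / q + 1 with hk
  have hkle : k ≤ g + 1 := by
    have : g / q ≤ g := Nat.div_le_self g q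
    omega
  have hpt : ∀ i, 1 ≤ i → (q * (g + i) < N ↔ i ≤ k) := by
    intro i hi
    have h1 : q * (g + i) = q * (g + 1) + q * (i - 1) := by
      have : g + i = (g + 1) + (i - 1) := by omega
      rw [this, Nat.mul_add]
    have hc : q * (i - 1) = (i - 1) * q := Nat.mul_comm _ _
    constructor
    · intro h
      have : i - 1 ≤ g / q := (Nat.le_div_iff_mul_le hq).2 (by omega)
      omega
    · intro h
      have h2 : (i - 1) * q ≤ g := (Nat.le_div_iff_mul_le hq).1 (by omega)
      omega
  have hptΛ : ∀ i, 1 ≤ i → q * (g + i) ∈ Λ := by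
    intro i hi
    rw [hmem]; right
    have : g + i ≤ q * (g + i) := Nat.le_mul_of_pos_left _ hq
    omega
  have hU : ∀ n, (n ∈ ⋃ i ∈ Finset.Icc 1 (g + 1), (fun x => q * (g + i) + x) '' Λ)
      ↔ (∃ i, 1 ≤ i ∧ i ≤ g + 1 ∧ n = q * (g + i)) ∨ N ≤ n := by
    intro n
    simp only [Set.mem_iUnion, Set.mem_image, Finset.mem_Icc, exists_prop]
    constructor
    · rintro ⟨i, ⟨hi1, hi2⟩, x, hx, rfl⟩
      rcases (hmem x).1 hx with rfl | hxg
      · left; exact ⟨i, hi1, hi2, by ring⟩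
      · right
        have : q * (g + 1) ≤ q * (g + i) := Nat.mul_le_mul_left q (by omega)
        omega
    · rintro (⟨i, hi1, hi2, rfl⟩ | hn)
      · exact ⟨i, ⟨hi1, hi2⟩, 0, (hmem 0).2 (Or.inl rfl), by ring⟩
      · exact ⟨1, ⟨le_refl 1, by omega⟩, n - q * (g + 1), (hmem _).2 (Or.inr (by omega)),
          by omega⟩
  set F : Finset ℕ :=
    insert 0 (Finset.Ico (g+1) N) \ (Finset.Icc 1 k).image (fun i => q * (g + i)) with hF
  have hset : Λ \ (⋃ i ∈ Finset.Icc 1 (g + 1), (fun x => q * (g + i) + x) '' Λ) = ↑F := by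
    ext n
    rw [Set.mem_diff, hU, hmem]
    simp only [hF, Finset.coe_sdiff, Set.mem_diff, Finset.coe_insert, Set.mem_insert_iff,
      Finset.coe_Ico, Set.mem_Ico, Finset.coe_image, Finset.coe_Icc, Set.mem_image,
      Set.mem_Icc]
    constructor
    · rintro ⟨hnΛ, hU'⟩
      push_neg at hU'
      obtain ⟨hnpt, hnN⟩ := hU'
      refine ⟨by omega, ?_⟩
      rintro ⟨i, ⟨hi1, hi2⟩, hqn⟩
      exact absurd hqn.symm (hnpt i hi1 (by omega))
    · rintro ⟨hn, hnpt⟩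
      have hnN : n < N := by omega
      refine ⟨by omega, ?_⟩
      push_neg
      refine ⟨?_, by omega⟩
      intro i hi1 hi2 hqn
      exact hnpt ⟨i, ⟨hi1, (hpt i hi1).1 (by omega)⟩, hqn.symm⟩
  rw [hset, Set.ncard_coe_finset]
  have hsub : (Finset.Icc 1 k).image (fun i => q * (g + i)) ⊆ insert 0 (Finset.Ico (g+1) N) := by
    intro n hn
    simp only [Finset.mem_image, Finset.mem_Icc] at hn
    obtain ⟨i, ⟨hi1, hi2⟩, rfl⟩ := hn
    have h1 := (hptΛ i hi1)
    rw [hmem] at h1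
    have h2 := (hpt i hi1).2 hi2
    rcases h1 with h1 | h1
    · exact Finset.mem_insert.2 (Or.inl h1)
    · exact Finset.mem_insert.2 (Or.inr (Finset.mem_Ico.2 ⟨h1, h2⟩))
  have hcardim : ((Finset.Icc 1 k).image (fun i => q * (g + i))).card = k := by
    rw [Finset.card_image_of_injective _ (fun a b hab => by
      have := Nat.eq_of_mul_eq_mul_left hq hab
      omega)]
    simp
  rw [Finset.card_sdiff_of_subset hsub, hcardim]
  have h0 : (0:ℕ) ∉ Finset.Ico (g+1) N := by simp
  rw [Finset.card_insert_of_notMem h0, Nat.card_Ico]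
  have hkq : (g + q) / q = k := by rw [hk, Nat.add_div_right _ hq]
  rw [hkq]
  have hNg : N - (g+1) = q * (g+1) := by omega
  rw [hNg]
  have hQ : ((q * (g + 1) : ℕ) : ℤ) = (q : ℤ) * ((g : ℤ) + 1) := by push_cast; ring
  have hge : g + 1 ≤ q * (g + 1) := Nat.le_mul_of_pos_left _ hq
  omega
end

section
/- Let Λ be a numerical semigroup of genus g generated by positive integers λ1 < … < λm and let q ≥ 2 be an integer. Then q·(#(Λ \ ∪_{i=1}^{m} (q·λi + Λ)) + 1) ≤ (q² − 1)·g + q² + 2q − 1; equivalently, #(Λ \ ∪_{i=1}^{m}(q·λi + Λ)) + 1 ≤ (q − 1/q)·g + q + 2 − 1/q. (This is the combinatorial content of the paper's improvement of Serre's upper bound: N_q(g) ≤ (q − 1/q)g + q + 2 − 1/q.) -/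
/-!
Let `ℓ = λ₁`, so that every nonzero element of `Λ` is at least `ℓ`. Everything in `Λ` outside the
union lies in the Apéry set `Λ \ (qℓ + Λ)`, whose elements are pairwise incongruent modulo `qℓ`,
so it has at most `qℓ` elements. For `0 < j` with `qj < ℓ` and `ℓ + j ∈ Λ`, the element
`q(ℓ + j)` lies in that Apéry set (because `qj` is a gap) and also in the union (because
`ℓ + j = λᵢ + ν`), so it is not counted. The remaining `j` give gaps `ℓ + j`, which together with
the gaps `1, …, ℓ - 1` are paid for by the genus. Taking `j` up to `⌊(ℓ - 1)/q⌋` and balancing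
the two estimates gives the bound.
-/

open Set

theorem AddSubmonoid.exists_mem_add_of_mem_closure {M : Type*} [AddMonoid M] {s : Set M} {x : M}
    (hx : x ∈ closure s) (hx0 : x ≠ 0) : ∃ a ∈ s, ∃ y ∈ closure s, x = a + y := by
  induction hx using closure_induction with
  | mem a ha => exact ⟨a, ha, 0, zero_mem _, (add_zero a).symm⟩
  | zero => exact absurd rfl hx0
  | add x y hx hy ihx ihy =>
    by_cases hx0' : x = 0
    · subst hx0'
      rw [zero_add] at hx0 ⊢
      exact ihy hx0
    · obtain ⟨a, ha, z, hz, rfl⟩ := ihx hx0'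
      exact ⟨a, ha, z + y, add_mem hz hy, add_assoc a z y⟩

theorem le_of_mem_closure_of_forall_le {s : Set ℕ} {ℓ x : ℕ} (hs : ∀ a ∈ s, ℓ ≤ a)
    (hx : x ∈ AddSubmonoid.closure s) (hx0 : x ≠ 0) : ℓ ≤ x := by
  obtain ⟨a, ha, y, -, rfl⟩ := AddSubmonoid.exists_mem_add_of_mem_closure hx hx0
  exact (hs a ha).trans (Nat.le_add_right a y)

theorem mul_mem_iUnion_image_closure_range {ι : Type*} (lam : ι → ℕ) (q : ℕ) {y : ℕ}
    (hy : y ∈ AddSubmonoid.closure (range lam)) (hy0 : y ≠ 0) :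
    q * y ∈ ⋃ i, (fun x => q * lam i + x) '' (AddSubmonoid.closure (range lam) : Set ℕ) := by
  obtain ⟨_, ⟨i, rfl⟩, ν, hν, rfl⟩ := AddSubmonoid.exists_mem_add_of_mem_closure hy hy0
  exact mem_iUnion.mpr
    ⟨i, q * ν, by simpa using AddSubmonoid.nsmul_mem _ hν q, (mul_add q _ ν).symm⟩

theorem setOf_exists_sum_mul_eq_closure_range {m : ℕ} {lam : Fin m → ℕ} :
    {n : ℕ | ∃ a : Fin m → ℕ, n = ∑ i, a i * lam i} = AddSubmonoid.closure (range lam) := by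
  ext n
  simp [AddSubmonoid.mem_closure_range_iff_of_fintype]

theorem nonempty_of_finite_compl_closure_range {ι : Type*} {f : ι → ℕ}
    (hfin : ((AddSubmonoid.closure (range f) : Set ℕ)ᶜ).Finite) : Nonempty ι := by
  by_contra h
  rw [not_nonempty_iff] at h
  rw [range_eq_empty, AddSubmonoid.closure_empty, AddSubmonoid.coe_bot] at hfin
  exact (finite_singleton 0).infinite_compl hfin

section Apery

variable (S : AddSubmonoid ℕ)

def apery (n : ℕ) : Set ℕ := (S : Set ℕ) \ (fun x => n + x) '' S

theorem mem_add_image_of_lt_of_mod_eq {n x y : ℕ} (hn : n ∈ S) (hx : x ∈ S) (hxy : x < y)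
    (hmod : x % n = y % n) : y ∈ (fun z => n + z) '' (S : Set ℕ) := by
  obtain ⟨k, hk⟩ : n ∣ y - x := Nat.dvd_of_mod_eq_zero (Nat.sub_mod_eq_zero_of_mod_eq hmod.symm)
  obtain ⟨j, rfl⟩ : ∃ j, k = j + 1 :=
    Nat.exists_eq_add_one.mpr (Nat.pos_of_ne_zero (by rintro rfl; omega))
  refine ⟨x + j • n, S.add_mem hx (S.nsmul_mem hn j), ?_⟩
  simp only [smul_eq_mul, mul_add, mul_one] at hk ⊢
  rw [mul_comm j n]
  omega

theorem mapsTo_mod_apery (n : ℕ) : MapsTo (· % n) (apery S n) (Iio n) := by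
  rintro x ⟨hx, hxn⟩
  exact Nat.mod_lt x (Nat.pos_of_ne_zero fun h => hxn ⟨x, hx, by simp [h]⟩)

theorem injOn_mod_apery {n : ℕ} (hn : n ∈ S) : InjOn (· % n) (apery S n) := by
  intro x hx y hy hxy
  by_contra hne
  rcases Nat.lt_or_gt_of_ne hne with h | h
  · exact hy.2 (mem_add_image_of_lt_of_mod_eq S hn hx.1 h hxy)
  · exact hx.2 (mem_add_image_of_lt_of_mod_eq S hn hy.1 h hxy.symm)

theorem finite_apery {n : ℕ} (hn : n ∈ S) : (apery S n).Finite :=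
  Finite.of_injOn (mapsTo_mod_apery S n) (injOn_mod_apery S hn) (finite_Iio n)

theorem ncard_apery_le {n : ℕ} (hn : n ∈ S) : (apery S n).ncard ≤ n :=
  (ncard_le_ncard_of_injOn _ (mapsTo_mod_apery S n) (injOn_mod_apery S hn)).trans_eq
    (ncard_Iio_nat n)

variable {S}

theorem mul_mem_apery {q ℓ y : ℕ} (hq : 0 < q) (hmult : ∀ x ∈ S, x ≠ 0 → ℓ ≤ x) (hy : y ∈ S)
    (hℓy : ℓ < y) (hsmall : q * (y - ℓ) < ℓ) :
    q * y ∈ apery S (q * ℓ) := by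
  refine ⟨by simpa using S.nsmul_mem hy q, ?_⟩
  rintro ⟨z, hz, hzy⟩
  simp only at hzy
  have hz_eq : z = q * (y - ℓ) := by
    rw [Nat.mul_sub, ← hzy]
    omega
  have := hmult z hz (by rw [hz_eq]; exact (Nat.mul_pos hq (by omega)).ne')
  omega

theorem ncard_diff_add_ncard_inter_le {q ℓ : ℕ} (hq : 0 < q) (hℓ : ℓ ∈ S)
    (hmult : ∀ x ∈ S, x ≠ 0 → ℓ ≤ x) {U : Set ℕ} (hU : (fun x => q * ℓ + x) '' (S : Set ℕ) ⊆ U)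
    (hqU : ∀ y ∈ S, y ≠ 0 → q * y ∈ U) {K : ℕ} (hK : q * K ≤ ℓ - 1) :
    ((S : Set ℕ) \ U).ncard + (Ioc ℓ (ℓ + K) ∩ S).ncard ≤ q * ℓ := by
  set T := (q * ·) '' (Ioc ℓ (ℓ + K) ∩ S)
  have hTU : T ⊆ U := by
    rintro _ ⟨y, ⟨hyI, hy⟩, rfl⟩
    exact hqU y hy (by rw [mem_Ioc] at hyI; omega)
  have hTapery : T ⊆ apery S (q * ℓ) := by
    rintro _ ⟨y, ⟨hyI, hy⟩, rfl⟩
    simp only [mem_Ioc] at hyI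
    refine mul_mem_apery hq hmult hy hyI.1 ?_
    have := Nat.mul_le_mul_left q (show y - ℓ ≤ K by omega)
    have := Nat.mul_pos hq (show 0 < y - ℓ by omega)
    omega
  have hSU : (S : Set ℕ) \ U ⊆ apery S (q * ℓ) := sdiff_subset_sdiff_right hU
  have hdisj : Disjoint ((S : Set ℕ) \ U) T := disjoint_left.mpr fun x hx hxT => hx.2 (hTU hxT)
  have hqℓ : q * ℓ ∈ S := by simpa using S.nsmul_mem hℓ q
  have hfin := finite_apery S hqℓ
  calc _ = ((S : Set ℕ) \ U ∪ T).ncard := by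
        rw [ncard_union_eq hdisj (hfin.subset hSU) (hfin.subset hTapery),
          ncard_image_of_injective _ (mul_right_injective₀ hq.ne')]
    _ ≤ (apery S (q * ℓ)).ncard :=
        ncard_le_ncard (union_subset hSU hTapery) hfin
    _ ≤ q * ℓ := ncard_apery_le S hqℓ

end Apery

theorem pred_add_ncard_sdiff_le_ncard_compl {S : AddSubmonoid ℕ} (hfin : (Sᶜ : Set ℕ).Finite)
    {ℓ : ℕ} (hmult : ∀ x ∈ S, x ≠ 0 → ℓ ≤ x) {I : Set ℕ} (hI : ∀ y ∈ I, ℓ ≤ y) :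
    (ℓ - 1) + (I \ S).ncard ≤ (Sᶜ : Set ℕ).ncard := by
  have hlow : Ioo 0 ℓ ⊆ (Sᶜ : Set ℕ) := fun x hx hxS =>
    absurd (hmult x hxS hx.1.ne') (not_le.mpr hx.2)
  have hdisj : Disjoint (Ioo 0 ℓ) (I \ S) :=
    disjoint_left.mpr fun x hx hxI => absurd (hI x hxI.1) (not_le.mpr hx.2)
  calc (ℓ - 1) + (I \ S).ncard = (Ioo 0 ℓ ∪ I \ S).ncard := by
        rw [ncard_union_eq hdisj (finite_Ioo 0 ℓ) (hfin.subset fun x hx => hx.2), ncard_Ioo_nat,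
          Nat.sub_zero]
    _ ≤ (Sᶜ : Set ℕ).ncard := ncard_le_ncard (union_subset hlow fun x hx => hx.2) hfin

theorem exists_mul_le_sub_one_and_le_mul_add {q : ℕ} (hq : 0 < q) (ℓ : ℕ) :
    ∃ K, q * K ≤ ℓ - 1 ∧ ℓ ≤ q * K + q := by
  refine ⟨(ℓ - 1) / q, Nat.mul_div_le (ℓ - 1) q, ?_⟩
  have := Nat.lt_div_mul_add (a := ℓ - 1) hq
  rw [mul_comm]
  omega

theorem serre_bound_of_counts {q ℓ K s a b g : ℕ} (hq : 2 ≤ q) (hremoved : s + a ≤ q * ℓ)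
    (hsplit : a + b = K) (hgaps : ℓ - 1 + b ≤ g) (hK : ℓ ≤ q * K + q) :
    (q : ℤ) * ((s + 1 : ℕ) : ℤ) ≤ ((q : ℤ) ^ 2 - 1) * g + (q : ℤ) ^ 2 + 2 * q - 1 := by
  have hgaps' : ℓ + b ≤ g + 1 := by omega
  have hq2 : (0 : ℤ) ≤ (q : ℤ) ^ 2 - 1 := by nlinarith
  zify at hq hsplit hremoved hgaps' hK
  push_cast
  nlinarith [mul_le_mul_of_nonneg_left hremoved (by positivity : (0 : ℤ) ≤ q),
    congrArg ((q : ℤ) * ·) hsplit, mul_le_mul_of_nonneg_left hgaps' hq2,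
    mul_nonneg (show (0 : ℤ) ≤ (q : ℤ) ^ 2 - q - 1 by nlinarith) (Nat.cast_nonneg (α := ℤ) b)]

theorem serre_improvement_general
    (Λ : Set ℕ) (hfin : (Λᶜ : Set ℕ).Finite)
    (g : ℕ) (hg : g = (Λᶜ : Set ℕ).ncard)
    (q : ℕ) (hq : 2 ≤ q)
    (m : ℕ)
    (lam : Fin m → ℕ)
    (hlam_mono : StrictMono lam)
    (hgen : Λ = {n : ℕ | ∃ a : Fin m → ℕ, n = ∑ i, a i * lam i}) :
    (q : ℤ) * (((Λ \ ⋃ i : Fin m, (fun x => q * lam i + x) '' Λ).ncard + 1 : ℕ) : ℤ) ≤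
      ((q : ℤ) ^ 2 - 1) * (g : ℤ) + (q : ℤ) ^ 2 + 2 * (q : ℤ) - 1 := by
  set S := AddSubmonoid.closure (range lam)
  obtain rfl : Λ = S := hgen.trans setOf_exists_sum_mul_eq_closure_range
  have hm : 0 < m := Fin.pos_iff_nonempty.mpr (nonempty_of_finite_compl_closure_range hfin)
  set ℓ := lam ⟨0, hm⟩
  have hmult : ∀ x ∈ S, x ≠ 0 → ℓ ≤ x := fun x =>
    le_of_mem_closure_of_forall_le (forall_mem_range.mpr fun j =>
      hlam_mono.monotone (Fin.mk_le_mk.mpr (Nat.zero_le j)))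
  obtain ⟨K, hKle, hKge⟩ := exists_mul_le_sub_one_and_le_mul_add (by omega : 0 < q) ℓ
  have hremoved := ncard_diff_add_ncard_inter_le (q := q) (ℓ := ℓ) (by omega)
    (AddSubmonoid.subset_closure (mem_range_self _)) hmult
    (subset_iUnion_of_subset (⟨0, hm⟩ : Fin m) subset_rfl)
    (fun _ => mul_mem_iUnion_image_closure_range lam q) hKle
  have hgaps := pred_add_ncard_sdiff_le_ncard_compl hfin hmult (I := Ioc ℓ (ℓ + K))
    fun y hy => hy.1.le
  have hsplit := ncard_inter_add_ncard_sdiff_eq_ncard (Ioc ℓ (ℓ + K)) (S : Set ℕ)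
  rw [ncard_Ioc_nat, Nat.add_sub_cancel_left] at hsplit
  exact hg ▸ serre_bound_of_counts hq hremoved hsplit hgaps hKge

/-- combinatorial content of Proposition 2: For a numerical
semigroup `Λ` of genus `g` generated by positive integers
`λ 0 < … < λ (m-1)` and an integer `q ≥ 2`,
`q·(#(Λ \ ⋃ i, (q·λ i + Λ)) + 1) ≤ (q² − 1)·g + q² + 2q − 1`,
i.e. `#(Λ \ ⋃ i, (q·λ i + Λ)) + 1 ≤ (q − 1/q)·g + q + 2 − 1/q`. -/
theorem serre_improvement
    (Λ : Set ℕ) (hfin : (Λᶜ : Set ℕ).Finite)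
    (g : ℕ) (hg : g = (Λᶜ : Set ℕ).ncard)
    (q : ℕ) (hq : 2 ≤ q)
    (m : ℕ)
    (lam : Fin m → ℕ)
    (hlam_pos : ∀ i, 0 < lam i)
    (hlam_mono : StrictMono lam)
    (hgen : Λ = {n : ℕ | ∃ a : Fin m → ℕ, n = ∑ i, a i * lam i}) :
    (q : ℤ) * (((Λ \ ⋃ i : Fin m, (fun x => q * lam i + x) '' Λ).ncard + 1 : ℕ) : ℤ) ≤
      ((q : ℤ) ^ 2 - 1) * (g : ℤ) + (q : ℤ) ^ 2 + 2 * (q : ℤ) - 1 :=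
  serre_improvement_general Λ hfin g hg q hq m lam hlam_mono hgen
end

section
/- Let Λ be a numerical semigroup generated by positive integers λ1 < … < λm with m ≥ 2, let q be a positive integer, and let c be the conductor of Λ, i.e. the least natural number c such that every integer n ≥ c belongs to Λ. If q·λ1 + c ≤ q·λ2, then Λ \ ∪_{i=1}^{m} (q·λi + Λ) = Λ \ (q·λ1 + Λ); consequently #(Λ \ ∪_{i=1}^{m}(q·λi + Λ)) = q·λ1. -/
lemma card_diff_shift (Λ : Set ℕ) (c t : ℕ)
    (hadd : ∀ a b : ℕ, a ∈ Λ → b ∈ Λ → a + b ∈ Λ)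
    (hcmem : ∀ n : ℕ, c ≤ n → n ∈ Λ)
    (hgap : ∀ x : ℕ, x ∉ Λ → x < c)
    (ht : t ∈ Λ) :
    (Λ \ (fun x => t + x) '' Λ).ncard = t := by
  classical
  set S : Finset ℕ := (Finset.range (t + c)).filter (· ∈ Λ) with hS
  set T : Finset ℕ := Finset.image (t + ·) ((Finset.range c).filter (· ∈ Λ)) with hT
  have hset : Λ \ (fun x => t + x) '' Λ = ↑(S \ T) := by
    ext x
    simp only [Finset.coe_sdiff, Set.mem_diff, Finset.mem_coe, hS, hT,
      Finset.mem_filter, Finset.mem_range, Finset.mem_image, Set.mem_image]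
    constructor
    · rintro ⟨hx, hnx⟩
      have hxlt : x < t + c := by
        by_contra h
        exact hnx ⟨x - t, hcmem _ (by omega), by omega⟩
      exact ⟨⟨hxlt, hx⟩, fun ⟨μ, ⟨hμc, hμΛ⟩, hμ⟩ => hnx ⟨μ, hμΛ, hμ⟩⟩
    · rintro ⟨⟨hxlt, hx⟩, hnx⟩
      refine ⟨hx, ?_⟩
      rintro ⟨μ, hμΛ, hμ⟩
      exact hnx ⟨μ, ⟨by omega, hμΛ⟩, hμ⟩
  rw [hset, Set.ncard_coe_finset]
  have hTS : T ⊆ S := by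
    intro x hx
    simp only [hT, Finset.mem_image, Finset.mem_filter, Finset.mem_range] at hx
    obtain ⟨μ, ⟨hμc, hμΛ⟩, rfl⟩ := hx
    simp only [hS, Finset.mem_filter, Finset.mem_range]
    exact ⟨by omega, hadd _ _ ht hμΛ⟩
  rw [Finset.card_sdiff_of_subset hTS]
  have hTcard : T.card = ((Finset.range c).filter (· ∈ Λ)).card :=
    Finset.card_image_of_injective _ (fun a b h => by omega)
  have h1 : ((Finset.range c).filter (· ∈ Λ)).card
      + ((Finset.range c).filter (fun x => ¬ x ∈ Λ)).card = c := by
    rw [Finset.card_filter_add_card_filter_not]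
    simp
  have h2 : S.card + ((Finset.range (t + c)).filter (fun x => ¬ x ∈ Λ)).card = t + c := by
    rw [hS, Finset.card_filter_add_card_filter_not]
    simp
  have h3 : (Finset.range (t + c)).filter (fun x => ¬ x ∈ Λ)
      = (Finset.range c).filter (fun x => ¬ x ∈ Λ) := by
    ext x
    simp only [Finset.mem_filter, Finset.mem_range]
    constructor
    · rintro ⟨_, hx⟩; exact ⟨hgap x hx, hx⟩
    · rintro ⟨hx1, hx⟩; exact ⟨by omega, hx⟩
  rw [h3] at h2
  rw [hTcard]
  omega

/-- Remark 1: Let `Λ` be a numerical semigroup generated by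
positive integers `λ 0 < … < λ (m-1)` with `m ≥ 2`, let `q` be a positive
integer, and let `c` be the conductor of `Λ`.  If `q·λ₁ + c ≤ q·λ₂` then
`Λ \ ⋃ i, (q·λ i + Λ) = Λ \ (q·λ₁ + Λ)`, and consequently
`#(Λ \ ⋃ i, (q·λ i + Λ)) = q·λ₁`. -/
theorem bounds_coincide_of_conductor
    (Λ : Set ℕ) (hfin : (Λᶜ : Set ℕ).Finite)
    (q : ℕ) (hq : 0 < q)
    (m : ℕ) (hm : 2 ≤ m)
    (lam : Fin m → ℕ)
    (hlam_pos : ∀ i, 0 < lam i)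
    (hlam_mono : StrictMono lam)
    (hgen : Λ = {n : ℕ | ∃ a : Fin m → ℕ, n = ∑ i, a i * lam i})
    (c : ℕ) (hc : c = sInf {x : ℕ | ∀ n : ℕ, x ≤ n → n ∈ Λ})
    (hcond : q * lam ⟨0, by omega⟩ + c ≤ q * lam ⟨1, by omega⟩) :
    Λ \ ⋃ i : Fin m, (fun x => q * lam i + x) '' Λ =
        Λ \ (fun x => q * lam ⟨0, by omega⟩ + x) '' Λ ∧
      (Λ \ ⋃ i : Fin m, (fun x => q * lam i + x) '' Λ).ncard =
        q * lam ⟨0, by omega⟩ := by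
  classical
  have h0 : (0 : ℕ) ∈ Λ := by
    rw [hgen]; exact ⟨fun _ => 0, by simp⟩
  have hadd : ∀ a b : ℕ, a ∈ Λ → b ∈ Λ → a + b ∈ Λ := by
    intro a b ha hb
    rw [hgen] at ha hb ⊢
    obtain ⟨f, rfl⟩ := ha; obtain ⟨g, rfl⟩ := hb
    exact ⟨fun i => f i + g i, by rw [← Finset.sum_add_distrib]; simp [add_mul]⟩
  have hmem : ∀ i, lam i ∈ Λ := by
    intro i; rw [hgen]
    refine ⟨fun j => if j = i then 1 else 0, ?_⟩
    simp
  have hmul : ∀ (n : ℕ) (i : Fin m), n * lam i ∈ Λ := by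
    intro n i
    induction n with
    | zero => simpa using h0
    | succ k ih => rw [Nat.succ_mul]; exact hadd _ _ ih (hmem i)
  have hcne : {x : ℕ | ∀ n : ℕ, x ≤ n → n ∈ Λ}.Nonempty := by
    refine ⟨hfin.toFinset.sup id + 1, fun n hn => ?_⟩
    by_contra hnot
    have h1 : n ∈ hfin.toFinset := hfin.mem_toFinset.mpr hnot
    have h2 := Finset.le_sup (f := id) h1
    simp only [id] at h2
    omega
  have hcmem : ∀ n : ℕ, c ≤ n → n ∈ Λ := by
    rw [hc]; exact Nat.sInf_mem hcne
  have hgap : ∀ x : ℕ, x ∉ Λ → x < c := by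
    intro x hx
    by_contra h
    exact hx (hcmem x (by omega))
  have htΛ : q * lam (⟨0, by omega⟩ : Fin m) ∈ Λ := hmul q _
  have key : ∀ x, x ∈ Λ → x ∉ (fun y => q * lam (⟨0, by omega⟩ : Fin m) + y) '' Λ →
      ∀ i : Fin m, x ∉ (fun y => q * lam i + y) '' Λ := by
    intro x hx hximg i hxi
    obtain ⟨μ, hμ, hμx⟩ := hxi
    have hμx' : q * lam i + μ = x := hμx
    rcases Nat.eq_zero_or_pos i.val with h0i | h1i
    · apply hximg
      refine ⟨μ, hμ, ?_⟩
      have hi : (⟨0, by omega⟩ : Fin m) = i := Fin.ext h0i.symm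
      rw [hi]; exact hμx
    · have h1le : lam (⟨1, by omega⟩ : Fin m) ≤ lam i :=
        hlam_mono.monotone (show (⟨1, by omega⟩ : Fin m) ≤ i from by
          simp only [Fin.le_def]; omega)
      have hq1 : q * lam (⟨1, by omega⟩ : Fin m) ≤ q * lam i := Nat.mul_le_mul_left q h1le
      apply hximg
      refine ⟨x - q * lam (⟨0, by omega⟩ : Fin m), hcmem _ (by omega), ?_⟩
      show q * lam (⟨0, by omega⟩ : Fin m) + (x - q * lam (⟨0, by omega⟩ : Fin m)) = x
      omega
  have heq : Λ \ ⋃ i : Fin m, (fun x => q * lam i + x) '' Λ =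
      Λ \ (fun x => q * lam (⟨0, by omega⟩ : Fin m) + x) '' Λ := by
    ext x
    simp only [Set.mem_diff, Set.mem_iUnion]
    constructor
    · rintro ⟨hx, hni⟩
      exact ⟨hx, fun h => hni ⟨⟨0, by omega⟩, h⟩⟩
    · rintro ⟨hx, hni⟩
      exact ⟨hx, fun ⟨i, hi⟩ => key x hx hni i hi⟩
  refine ⟨heq, ?_⟩
  rw [heq]
  exact card_diff_shift Λ c _ hadd hcmem hgap htΛ
end

section
/- Let (a1, …, ak) be a telescopic sequence of positive integers with gcd(a1, …, ak) = 1 and let Λ = ⟨a1, …, ak⟩. Then for every λ ∈ Λ there exist uniquely determined natural numbers x1, …, xk with 0 ≤ x_j < d_{j−1}/d_j for all 2 ≤ j ≤ k such that λ = x1·a1 + … + xk·ak. -/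
/-!
Write `d j = gcd (a 1, …, a j)`, so that `d (k + 1) = gcd (d k) (a (k + 1))`. Telescopy at `k + 1`
says exactly that `(d k / d (k + 1)) • a (k + 1) ∈ ⟨a 1, …, a k⟩`, so the coefficient of `a (k + 1)`
can be reduced modulo `d k / d (k + 1)`. Conversely, everything in `⟨a 1, …, a k⟩` is divisible by
`d k`, and `a (k + 1)` is invertible modulo `d k / d (k + 1)` after division by `d (k + 1)`, so the
reduced coefficient is determined by `λ`. Induction on `k` does the rest.
-/

/-- The numerical semigroup generated by `a 1, …, a k` (indices `1, …, k`). -/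
def genSemigroup (k : ℕ) (a : ℕ → ℕ) : Set ℕ :=
  {n : ℕ | ∃ x : ℕ → ℕ, n = ∑ l ∈ Finset.Icc 1 k, x l * a l}

/-- The sequence `a 1, …, a k` is telescopic: with `d j = gcd (a 1, …, a j)`,
for all `2 ≤ j ≤ k` the element `a j / d j` lies in the semigroup
`Λ_{j-1} = ⟨a 1 / d (j-1), …, a (j-1) / d (j-1)⟩`. -/
def IsTelescopic (k : ℕ) (a : ℕ → ℕ) : Prop :=
  ∀ j : ℕ, 2 ≤ j → j ≤ k →
    a j / Finset.gcd (Finset.Icc 1 j) a ∈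
      genSemigroup (j - 1) (fun l => a l / Finset.gcd (Finset.Icc 1 (j - 1)) a)

open Finset Function

def prefixGcd (a : ℕ → ℕ) (j : ℕ) : ℕ := (Icc 1 j).gcd a

def IsNormalForm (k : ℕ) (a : ℕ → ℕ) (n : ℕ) (x : ℕ → ℕ) : Prop :=
  (∀ l, l ∉ Icc 1 k → x l = 0) ∧
  (∀ j, 2 ≤ j → j ≤ k → x j < prefixGcd a (j - 1) / prefixGcd a j) ∧
  n = ∑ l ∈ Icc 1 k, x l * a l

variable {a : ℕ → ℕ} {k n : ℕ}

lemma prefixGcd_zero (a : ℕ → ℕ) : prefixGcd a 0 = 0 := by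
  simp [prefixGcd]

lemma prefixGcd_one (a : ℕ → ℕ) : prefixGcd a 1 = a 1 := by
  simp [prefixGcd]

lemma prefixGcd_succ (a : ℕ → ℕ) (k : ℕ) :
    prefixGcd a (k + 1) = (prefixGcd a k).gcd (a (k + 1)) := by
  rw [prefixGcd, ← insert_Icc_right_eq_Icc_add_one (by omega), gcd_insert, Nat.gcd_comm]
  rfl

lemma prefixGcd_succ_dvd (a : ℕ → ℕ) (k : ℕ) : prefixGcd a (k + 1) ∣ prefixGcd a k := by
  rw [prefixGcd_succ]
  exact Nat.gcd_dvd_left _ _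

lemma prefixGcd_dvd {l : ℕ} (hl : l ∈ Icc 1 k) : prefixGcd a k ∣ a l :=
  gcd_dvd hl

lemma prefixGcd_dvd_of_mem_genSemigroup (hn : n ∈ genSemigroup k a) : prefixGcd a k ∣ n := by
  obtain ⟨x, rfl⟩ := hn
  exact dvd_sum fun l hl => (prefixGcd_dvd hl).mul_left _

lemma add_mem_genSemigroup {m : ℕ} (hn : n ∈ genSemigroup k a) (hm : m ∈ genSemigroup k a) :
    n + m ∈ genSemigroup k a := by
  obtain ⟨x, rfl⟩ := hn
  obtain ⟨y, rfl⟩ := hm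
  exact ⟨x + y, by simp only [Pi.add_apply, add_mul, sum_add_distrib]⟩

lemma mul_mem_genSemigroup (c : ℕ) (hn : n ∈ genSemigroup k a) : c * n ∈ genSemigroup k a := by
  obtain ⟨x, rfl⟩ := hn
  exact ⟨c • x, by simp only [mul_sum, Pi.smul_apply, smul_eq_mul, mul_assoc]⟩

lemma exists_of_mem_genSemigroup_succ (hn : n ∈ genSemigroup (k + 1) a) :
    ∃ c, ∃ ν ∈ genSemigroup k a, n = c * a (k + 1) + ν := by
  obtain ⟨y, rfl⟩ := hn
  exact ⟨y (k + 1), _, ⟨y, rfl⟩, by rw [sum_Icc_succ_top (by omega), add_comm]⟩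

lemma IsTelescopic.mono {k' : ℕ} (htel : IsTelescopic k' a) (h : k ≤ k') : IsTelescopic k a :=
  fun j h2 hj => htel j h2 (hj.trans h)

lemma IsTelescopic.prefixGcd_pos (htel : IsTelescopic (k + 1) a) (hk : 1 ≤ k)
    (hd : 0 < prefixGcd a (k + 1)) : 0 < prefixGcd a k := by
  -- otherwise `d (k + 1) = a (k + 1)`, and telescopy would put `1` into `⟨0, …, 0⟩`
  refine Nat.pos_of_ne_zero fun h0 => ?_
  rw [prefixGcd_succ a k, h0, Nat.gcd_zero_left] at hd
  obtain ⟨z, hz⟩ := htel (k + 1) (by omega) le_rfl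
  change a (k + 1) / prefixGcd a (k + 1) = ∑ l ∈ Icc 1 k, z l * (a l / prefixGcd a k) at hz
  simp [prefixGcd_succ a k, h0, Nat.div_self hd] at hz

lemma IsTelescopic.div_mul_mem (htel : IsTelescopic (k + 1) a) (hk : 1 ≤ k) :
    prefixGcd a k / prefixGcd a (k + 1) * a (k + 1) ∈ genSemigroup k a := by
  obtain ⟨z, hz⟩ := htel (k + 1) (by omega) le_rfl
  change a (k + 1) / prefixGcd a (k + 1) = ∑ l ∈ Icc 1 k, z l * (a l / prefixGcd a k) at hz
  have hak : prefixGcd a (k + 1) ∣ a (k + 1) := prefixGcd_dvd (by simp)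
  refine ⟨z, ?_⟩
  calc prefixGcd a k / prefixGcd a (k + 1) * a (k + 1)
      = prefixGcd a k * (a (k + 1) / prefixGcd a (k + 1)) := by
        rw [Nat.div_mul_right_comm (prefixGcd_succ_dvd a k), Nat.mul_div_assoc _ hak]
    _ = ∑ l ∈ Icc 1 k, z l * a l := by
        rw [hz, mul_sum]
        refine sum_congr rfl fun l hl => ?_
        rw [mul_left_comm, Nat.mul_div_cancel' (prefixGcd_dvd hl)]

-- Only the class of `r * c` modulo `d` is visible, and `c / gcd d c` is a unit modulo `d / gcd d c`.
lemma eq_of_mul_add_eq_mul_add {d c r r' μ μ' : ℕ} (hd : 0 < d)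
    (hr : r < d / d.gcd c) (hr' : r' < d / d.gcd c) (hμ : d ∣ μ) (hμ' : d ∣ μ')
    (h : r * c + μ = r' * c + μ') : r = r' := by
  have hμμ' : μ ≡ μ' [MOD d] :=
    (Nat.modEq_zero_iff_dvd.2 hμ).trans (Nat.modEq_zero_iff_dvd.2 hμ').symm
  have hrc : c * r ≡ c * r' [MOD d] := by
    rw [mul_comm c, mul_comm c]
    exact hμμ'.add_right_cancel (h ▸ Nat.ModEq.refl _)
  exact (Nat.ModEq.cancel_left_div_gcd hd hrc).eq_of_lt_of_lt hr hr'

namespace IsNormalForm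

lemma mem_genSemigroup {x : ℕ → ℕ} (hx : IsNormalForm k a n x) : n ∈ genSemigroup k a :=
  ⟨x, hx.2.2⟩

lemma update_succ {μ r : ℕ} {x : ℕ → ℕ} (hx : IsNormalForm k a μ x)
    (hr : r < prefixGcd a k / prefixGcd a (k + 1)) :
    IsNormalForm (k + 1) a (r * a (k + 1) + μ) (update x (k + 1) r) := by
  obtain ⟨hsupp, hbound, rfl⟩ := hx
  refine ⟨fun l hl => ?_, fun j h2 hj => ?_, ?_⟩
  · rw [update_of_ne (by simp at hl ⊢; omega)]
    exact hsupp l (by simp at hl ⊢; omega)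
  · rcases hj.lt_or_eq with hj | rfl
    · rw [update_of_ne (by omega)]
      exact hbound j h2 (by omega)
    · simpa using hr
  · rw [sum_Icc_succ_top (by omega), update_self, add_comm]
    congr 1
    exact sum_congr rfl fun l hl => by rw [update_of_ne (by simp at hl; omega)]

lemma exists_update_succ {x : ℕ → ℕ} (hk : 1 ≤ k) (hx : IsNormalForm (k + 1) a n x) :
    x (k + 1) < prefixGcd a k / prefixGcd a (k + 1) ∧
      ∃ μ, n = x (k + 1) * a (k + 1) + μ ∧ IsNormalForm k a μ (update x (k + 1) 0) := by
  obtain ⟨hsupp, hbound, rfl⟩ := hx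
  refine ⟨by simpa using hbound (k + 1) (by omega) le_rfl, _, ?_, fun l hl => ?_,
    fun j h2 hj => ?_, rfl⟩
  · rw [sum_Icc_succ_top (by omega), add_comm]
    congr 1
    exact sum_congr rfl fun l hl => by rw [update_of_ne (by simp at hl; omega)]
  · rcases eq_or_ne l (k + 1) with rfl | hl'
    · exact update_self ..
    · rw [update_of_ne hl']
      exact hsupp l (by simp at hl ⊢; omega)
  · rw [update_of_ne (by omega)]
    exact hbound j h2 (by omega)

end IsNormalForm

lemma exists_isNormalForm (hk : 1 ≤ k) (htel : IsTelescopic k a) (hd : 0 < prefixGcd a k)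
    (hn : n ∈ genSemigroup k a) : ∃ x, IsNormalForm k a n x := by
  induction k, hk using Nat.le_induction generalizing n with
  | base =>
    obtain ⟨y, rfl⟩ := hn
    refine ⟨update 0 1 (y 1), fun l hl => update_of_ne (by simpa using hl) .., by omega, ?_⟩
    simp
  | succ k hk ih =>
    obtain ⟨c, ν, hν, rfl⟩ := exists_of_mem_genSemigroup_succ hn
    set m := prefixGcd a k / prefixGcd a (k + 1)
    have hdk := htel.prefixGcd_pos hk hd
    have hm : 0 < m := Nat.div_pos (Nat.le_of_dvd hdk (prefixGcd_succ_dvd a k)) hd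
    have hmem : ν + c / m * (m * a (k + 1)) ∈ genSemigroup k a :=
      add_mem_genSemigroup hν (mul_mem_genSemigroup _ (htel.div_mul_mem hk))
    obtain ⟨x, hx⟩ := ih (htel.mono k.le_succ) hdk hmem
    refine ⟨update x (k + 1) (c % m), ?_⟩
    convert hx.update_succ (Nat.mod_lt c hm) using 1
    conv_lhs => rw [← Nat.mod_add_div c m]
    ring

theorem IsNormalForm.unique (hk : 1 ≤ k) (htel : IsTelescopic k a) (hd : 0 < prefixGcd a k)
    {x y : ℕ → ℕ} (hx : IsNormalForm k a n x) (hy : IsNormalForm k a n y) : x = y := by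
  induction k, hk using Nat.le_induction generalizing n x y with
  | base =>
    obtain ⟨hxs, -, hxn⟩ := hx
    obtain ⟨hys, -, rfl⟩ := hy
    rw [prefixGcd_one] at hd
    funext l
    rcases eq_or_ne l 1 with rfl | hl
    · simpa [hd.ne'] using hxn.symm
    · rw [hxs l (by simpa using hl), hys l (by simpa using hl)]
  | succ k hk ih =>
    have hdk := htel.prefixGcd_pos hk hd
    obtain ⟨hxb, μ, rfl, hxμ⟩ := hx.exists_update_succ hk
    obtain ⟨hyb, μ', hμ, hyμ⟩ := hy.exists_update_succ hk
    rw [prefixGcd_succ a k] at hxb hyb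
    have htop : x (k + 1) = y (k + 1) :=
      eq_of_mul_add_eq_mul_add hdk hxb hyb
        (prefixGcd_dvd_of_mem_genSemigroup hxμ.mem_genSemigroup)
        (prefixGcd_dvd_of_mem_genSemigroup hyμ.mem_genSemigroup) hμ
    rw [htop, add_left_cancel_iff] at hμ
    have hrest := ih (htel.mono k.le_succ) hdk hxμ (hμ ▸ hyμ)
    calc x = update (update x (k + 1) 0) (k + 1) (x (k + 1)) := by simp
      _ = update (update y (k + 1) 0) (k + 1) (y (k + 1)) := by rw [hrest, htop]
      _ = y := by simp

theorem existsUnique_isNormalForm (htel : IsTelescopic k a) (hd : 0 < prefixGcd a k)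
    (hn : n ∈ genSemigroup k a) : ∃! x, IsNormalForm k a n x := by
  have hk : 1 ≤ k := Nat.one_le_iff_ne_zero.2 fun h => by simp [h, prefixGcd_zero] at hd
  obtain ⟨x, hx⟩ := exists_isNormalForm hk htel hd hn
  exact ⟨x, hx, fun y hy => IsNormalForm.unique hk htel hd hy hx⟩

theorem telescopic_unique_representation_general
    (k : ℕ) (a : ℕ → ℕ)
    (hgcd : Finset.gcd (Finset.Icc 1 k) a = 1)
    (htel : IsTelescopic k a)
    (lam : ℕ) (hlam : lam ∈ genSemigroup k a) :
    ∃! x : ℕ → ℕ,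
      (∀ l : ℕ, l ∉ Finset.Icc 1 k → x l = 0) ∧
      (∀ j : ℕ, 2 ≤ j → j ≤ k →
        x j < Finset.gcd (Finset.Icc 1 (j - 1)) a / Finset.gcd (Finset.Icc 1 j) a) ∧
      lam = ∑ l ∈ Finset.Icc 1 k, x l * a l := by
  have hd : 0 < prefixGcd a k := by rw [prefixGcd, hgcd]; exact one_pos
  exact existsUnique_isNormalForm htel hd hlam

/-- Lemma 2: If `(a 1, …, a k)` is a telescopic sequence of
positive integers with `gcd (a 1, …, a k) = 1` and `Λ = ⟨a 1, …, a k⟩`, then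
every `λ ∈ Λ` has a unique representation `λ = ∑ x_j · a_j` with
`0 ≤ x_j < d_{j-1} / d_j` for all `2 ≤ j ≤ k`. -/
theorem telescopic_unique_representation
    (k : ℕ) (hk : 1 ≤ k) (a : ℕ → ℕ)
    (hpos : ∀ j ∈ Finset.Icc 1 k, 0 < a j)
    (hgcd : Finset.gcd (Finset.Icc 1 k) a = 1)
    (htel : IsTelescopic k a)
    (lam : ℕ) (hlam : lam ∈ genSemigroup k a) :
    ∃! x : ℕ → ℕ,
      (∀ l : ℕ, l ∉ Finset.Icc 1 k → x l = 0) ∧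
      (∀ j : ℕ, 2 ≤ j → j ≤ k →
        x j < Finset.gcd (Finset.Icc 1 (j - 1)) a / Finset.gcd (Finset.Icc 1 j) a) ∧
      lam = ∑ l ∈ Finset.Icc 1 k, x l * a l :=
  telescopic_unique_representation_general k a hgcd htel lam hlam
end

section
/- Let Λ be a telescopic semigroup and let (a1, …, ak) be a telescopic sequence generating Λ with k minimal among all telescopic sequences generating Λ. Then d_{j−1} ≥ 2·d_j for all 2 ≤ j ≤ k, where d_j = gcd(a1, …, a_j). (Equivalently: if d_{j−1} = d_j for some j, then a_j ∈ ⟨a1, …, a_{j−1}⟩ and deleting a_j yields a shorter telescopic sequence generating Λ.) -/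
open Finset

def sig (j l : ℕ) : ℕ := if l < j then l else l + 1
def tau (j l : ℕ) : ℕ := if l < j then l else l - 1

lemma tau_sig (j l : ℕ) : tau j (sig j l) = l := by
  unfold sig tau
  by_cases h : l < j
  · simp [h]
  · rw [if_neg h, if_neg (by omega)]; omega

lemma sig_inj (j : ℕ) : Function.Injective (sig j) := by
  intro x y h; have := tau_sig j x; rw [h, tau_sig] at this; omega

lemma image_sig {j m : ℕ} (h1 : 1 ≤ j) (h2 : j ≤ m) :
    (Icc 1 (m-1)).image (sig j) = (Icc 1 m).erase j := by
  ext x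
  simp only [mem_image, mem_erase, mem_Icc, sig]
  constructor
  · rintro ⟨l, ⟨hl1, hl2⟩, rfl⟩
    split <;> omega
  · rintro ⟨hx, hx1, hx2⟩
    by_cases h : x < j
    · exact ⟨x, ⟨hx1, by omega⟩, if_pos h⟩
    · exact ⟨x - 1, ⟨by omega, by omega⟩, by rw [if_neg (by omega)]; omega⟩

lemma sum_sig {j m : ℕ} (h1 : 1 ≤ j) (h2 : j ≤ m) (F : ℕ → ℕ) :
    ∑ l ∈ (Icc 1 m).erase j, F l = ∑ l ∈ Icc 1 (m-1), F (sig j l) := by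
  rw [← image_sig h1 h2, Finset.sum_image (fun x _ y _ h => sig_inj j h)]

lemma gcd_sig {j m : ℕ} (h1 : 1 ≤ j) (h2 : j ≤ m) (F : ℕ → ℕ) :
    Finset.gcd ((Icc 1 m).erase j) F = Finset.gcd (Icc 1 (m-1)) (fun l => F (sig j l)) := by
  rw [← image_sig h1 h2, Finset.gcd_image]
  rfl

lemma mem_gen_sig {j m : ℕ} (h1 : 1 ≤ j) (h2 : j ≤ m) (f : ℕ → ℕ) (n : ℕ) :
    n ∈ genSemigroup (m-1) (fun l => f (sig j l)) ↔
      ∃ x : ℕ → ℕ, n = ∑ l ∈ (Icc 1 m).erase j, x l * f l := by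
  constructor
  · rintro ⟨x, rfl⟩
    refine ⟨fun l => x (tau j l), ?_⟩
    rw [sum_sig h1 h2 (fun l => x (tau j l) * f l)]
    exact Finset.sum_congr rfl fun l _ => by rw [tau_sig]
  · rintro ⟨x, rfl⟩
    refine ⟨fun l => x (sig j l), ?_⟩
    rw [sum_sig h1 h2 (fun l => x l * f l)]

lemma mem_gen_erase {j m : ℕ} (h1 : 1 ≤ j) (h2 : j ≤ m) {f : ℕ → ℕ}
    (hfj : ∃ y : ℕ → ℕ, f j = ∑ l ∈ Icc 1 (j-1), y l * f l) (n : ℕ) :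
    n ∈ genSemigroup m f ↔ ∃ x : ℕ → ℕ, n = ∑ l ∈ (Icc 1 m).erase j, x l * f l := by
  have hjm : j ∈ Icc 1 m := by simp [mem_Icc]; omega
  have hsub : Icc 1 (j-1) ⊆ (Icc 1 m).erase j := by
    intro l hl; simp only [mem_Icc] at hl; simp only [mem_erase, mem_Icc]; omega
  obtain ⟨y, hy⟩ := hfj
  constructor
  · rintro ⟨x, rfl⟩
    refine ⟨fun l => x l + (if l ∈ Icc 1 (j-1) then x j * y l else 0), ?_⟩
    rw [← Finset.sum_erase_add _ _ hjm]
    simp only [add_mul, Finset.sum_add_distrib]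
    congr 1
    simp only [ite_mul, zero_mul]
    rw [Finset.sum_ite_mem, Finset.inter_eq_right.2 hsub, hy, Finset.mul_sum]
    exact Finset.sum_congr rfl fun l _ => by ring
  · rintro ⟨x, rfl⟩
    refine ⟨fun l => if l = j then 0 else x l, ?_⟩
    rw [← Finset.sum_erase_add _ _ hjm]
    simp only [reduceIte, zero_mul, add_zero]
    exact Finset.sum_congr rfl fun l hl => by rw [if_neg (Finset.ne_of_mem_erase hl)]

lemma gcd_erase {j m : ℕ} (h1 : 1 ≤ j) (h2 : j ≤ m) {f : ℕ → ℕ}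
    (hdvd : Finset.gcd (Icc 1 (j-1)) f ∣ f j) :
    Finset.gcd ((Icc 1 m).erase j) f = Finset.gcd (Icc 1 m) f := by
  have hjm : j ∈ Icc 1 m := by simp [mem_Icc]; omega
  have hsub : Icc 1 (j-1) ⊆ (Icc 1 m).erase j := by
    intro l hl; simp only [mem_Icc] at hl; simp only [mem_erase, mem_Icc]; omega
  have hG : Finset.gcd ((Icc 1 m).erase j) f ∣ f j :=
    ((Finset.gcd_mono hsub).trans hdvd)
  apply Nat.dvd_antisymm
  · refine Finset.dvd_gcd fun l hl => ?_
    rcases eq_or_ne l j with rfl | hne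
    · exact hG
    · exact Finset.gcd_dvd (Finset.mem_erase.2 ⟨hne, hl⟩)
  · exact Finset.gcd_mono (Finset.erase_subset _ _)


/-- step in the proof of Proposition 3: If `(a 1, …, a k)` is a
telescopic sequence of positive integers with `gcd = 1` generating `Λ`, with
`k` minimal among all telescopic sequences generating `Λ`, then
`d_{j-1} ≥ 2·d_j` for all `2 ≤ j ≤ k`, where `d j = gcd (a 1, …, a j)`. -/
theorem telescopic_minimal_gcd_halves
    (Λ : Set ℕ) (k : ℕ) (a : ℕ → ℕ)
    (hpos : ∀ j ∈ Finset.Icc 1 k, 0 < a j)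
    (hgcd : Finset.gcd (Finset.Icc 1 k) a = 1)
    (htel : IsTelescopic k a)
    (hgen : genSemigroup k a = Λ)
    (hmin : ∀ (k' : ℕ) (b : ℕ → ℕ),
      (∀ j ∈ Finset.Icc 1 k', 0 < b j) →
      Finset.gcd (Finset.Icc 1 k') b = 1 →
      IsTelescopic k' b →
      genSemigroup k' b = Λ → k ≤ k') :
    ∀ j : ℕ, 2 ≤ j → j ≤ k →
      2 * Finset.gcd (Finset.Icc 1 j) a ≤ Finset.gcd (Finset.Icc 1 (j - 1)) a := by
  intro j hj2 hjk
  by_contra hcon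
  push_neg at hcon
  have h1j : 1 ≤ j := by omega
  have gcdpos : ∀ m, 1 ≤ m → 0 < Finset.gcd (Icc 1 m) a := by
    intro m hm
    refine Nat.pos_of_ne_zero fun h0 => ?_
    have := Finset.gcd_eq_zero_iff.1 h0 1 (by simp [mem_Icc]; omega)
    exact absurd this (hpos 1 (by simp [mem_Icc]; omega)).ne'
  -- d_{j-1} = d_j
  have hdvd : Finset.gcd (Icc 1 j) a ∣ Finset.gcd (Icc 1 (j-1)) a :=
    Finset.gcd_mono (Finset.Icc_subset_Icc_right (by omega))
  have heq : Finset.gcd (Icc 1 (j-1)) a = Finset.gcd (Icc 1 j) a := by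
    obtain ⟨c, hc⟩ := hdvd
    have h1 := gcdpos (j-1) (by omega)
    have h2 := gcdpos j (by omega)
    rcases c with _ | _ | c
    · omega
    · omega
    · exfalso
      have h3 : Finset.gcd (Icc 1 j) a * 2 ≤ Finset.gcd (Icc 1 j) a * (c + 1 + 1) :=
        Nat.mul_le_mul_left _ (by omega)
      omega
  -- a j is a combination of a 1, ..., a (j-1)
  have htelj := htel j hj2 hjk
  rw [heq] at htelj
  obtain ⟨y, hy⟩ := htelj
  have hdjaj : Finset.gcd (Icc 1 j) a ∣ a j := Finset.gcd_dvd (by simp [mem_Icc]; omega)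
  have haj : a j = ∑ l ∈ Icc 1 (j-1), y l * a l := by
    have h2 : a j = (∑ l ∈ Icc 1 (j-1), y l * (a l / Finset.gcd (Icc 1 j) a)) *
        Finset.gcd (Icc 1 j) a := by
      rw [← hy, Nat.div_mul_cancel hdjaj]
    rw [h2, Finset.sum_mul]
    refine Finset.sum_congr rfl fun l hl => ?_
    have hdvdl : Finset.gcd (Icc 1 j) a ∣ a l := by
      refine Finset.gcd_dvd ?_
      simp only [mem_Icc] at hl ⊢
      omega
    rw [mul_assoc, Nat.div_mul_cancel hdvdl]
  have hdvd_aj : Finset.gcd (Icc 1 (j-1)) a ∣ a j := by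
    rw [haj]
    exact Finset.dvd_sum fun l hl => (Finset.gcd_dvd hl).mul_left (y l)
  -- key gcd computation for the shortened sequence
  have hgcdb : ∀ m, j ≤ m →
      Finset.gcd (Icc 1 (m-1)) (fun l => a (sig j l)) = Finset.gcd (Icc 1 m) a := by
    intro m hm
    rw [← gcd_sig h1j hm a, gcd_erase h1j hm hdvd_aj]
  -- apply minimality to the shortened sequence
  refine absurd (hmin (k-1) (fun l => a (sig j l)) ?_ ?_ ?_ ?_) (by omega)
  · -- positivity
    intro l hl
    simp only [mem_Icc] at hl
    refine hpos (sig j l) ?_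
    simp only [mem_Icc]
    unfold sig
    split <;> omega
  · -- gcd = 1
    rw [hgcdb k hjk, hgcd]
  · -- telescopic
    intro j' hj'2 hj'k
    by_cases hcase : j' < j
    · have hsig : ∀ l, l < j → sig j l = l := fun l hl => if_pos hl
      have hg1 : Finset.gcd (Icc 1 j') (fun l => a (sig j l)) = Finset.gcd (Icc 1 j') a :=
        Finset.gcd_congr rfl fun l hl => by
          simp only [mem_Icc] at hl
          rw [hsig l (by omega)]
      have hg2 : Finset.gcd (Icc 1 (j'-1)) (fun l => a (sig j l)) =
          Finset.gcd (Icc 1 (j'-1)) a :=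
        Finset.gcd_congr rfl fun l hl => by
          simp only [mem_Icc] at hl
          rw [hsig l (by omega)]
      beta_reduce
      rw [hsig j' hcase, hg1, hg2]
      obtain ⟨x, hx⟩ := htel j' hj'2 (by omega)
      refine ⟨x, hx.trans (Finset.sum_congr rfl fun l hl => ?_)⟩
      simp only [mem_Icc] at hl
      beta_reduce
      rw [hsig l (by omega)]
    · have hjj' : j ≤ j' := by omega
      have hD1 : Finset.gcd (Icc 1 j') (fun l => a (sig j l)) =
          Finset.gcd (Icc 1 (j'+1)) a := by
        have := hgcdb (j'+1) (by omega)
        simpa using this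
      have hD : Finset.gcd (Icc 1 (j'-1)) (fun l => a (sig j l)) =
          Finset.gcd (Icc 1 j') a := hgcdb j' hjj'
      have hsigj' : sig j j' = j' + 1 := if_neg hcase
      beta_reduce
      rw [hsigj', hD1, hD]
      have hmem := htel (j'+1) (by omega) (by omega)
      simp only [Nat.add_sub_cancel] at hmem
      have hDpos := gcdpos j' (by omega)
      have hfj : a j / Finset.gcd (Icc 1 j') a =
          ∑ l ∈ Icc 1 (j-1), y l * (a l / Finset.gcd (Icc 1 j') a) := by
        refine Nat.div_eq_of_eq_mul_left hDpos ?_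
        rw [haj, Finset.sum_mul]
        refine Finset.sum_congr rfl fun l hl => ?_
        have hdvdl : Finset.gcd (Icc 1 j') a ∣ a l := by
          refine Finset.gcd_dvd ?_
          simp only [mem_Icc] at hl ⊢
          omega
        rw [mul_assoc, Nat.div_mul_cancel hdvdl]
      obtain ⟨x, hx⟩ :=
        (mem_gen_erase h1j hjj' (f := fun l => a l / Finset.gcd (Icc 1 j') a)
          ⟨y, hfj⟩ _).mp hmem
      exact (mem_gen_sig h1j hjj' (fun l => a l / Finset.gcd (Icc 1 j') a) _).mpr ⟨x, hx⟩
  · -- generates Λ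
    rw [← hgen]
    exact Set.ext fun n =>
      (mem_gen_sig h1j hjk a n).trans (mem_gen_erase h1j hjk ⟨y, haj⟩ n).symm
end
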